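/- arXiv:1505.00194 — 11 statements merged into one kernel-verified Lean document; each statement's English description precedes it below -/
import Mathlib

section
/- Let V ⊆ ℤ be a modified set of differences, i.e. for all s, t ∈ V one has 2s − t ∈ V. Then either V has at most one element, or there exist c ∈ ℤ and d ∈ ℕ with d ≥ 1 such that V = {c + j·d : j ∈ ℤ} (the elements of V form a complete arithmetic sequence). -/
/-!
Any two elements `a, b` of a set closed under `(s, t) ↦ 2s - t` generate the whole line
`a + ℤ (b - a)`, by reflecting repeatedly. If `V` has two elements, let `d` be the least
positive difference of elements of `V`, attained by `c, c + d ∈ V`. Then `V ⊇ c + dℤ`, and an element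
`x ∈ V` off this line would lie strictly between `c + qd` and `c + (q + 1)d` for some `q`,
giving a smaller positive difference.
-/

section ReflectionClosed

variable {R : Type*} [CommRing R] {V : Set R} (hV : ∀ s ∈ V, ∀ t ∈ V, 2 * s - t ∈ V)
include hV

theorem add_zsmul_sub_mem {a b : R} (ha : a ∈ V) (hb : b ∈ V) (k : ℤ) :
    a + k • (b - a) ∈ V := by
  suffices ∀ k : ℤ, a + k • (b - a) ∈ V ∧ a + (k + 1) • (b - a) ∈ V from (this k).1
  intro k
  induction k using Int.induction_on with
  | zero => simp [ha, hb]
  | succ k ih =>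
    refine ⟨ih.2, ?_⟩
    convert hV _ ih.2 _ ih.1 using 1
    simp only [zsmul_eq_mul]; push_cast; ring
  | pred k ih =>
    refine ⟨?_, by simpa using ih.1⟩
    convert hV _ ih.1 _ ih.2 using 1
    simp only [zsmul_eq_mul]; push_cast; ring

end ReflectionClosed

theorem eq_setOf_add_mul_of_minimal_gap {V : Set ℤ}
    (hV : ∀ s ∈ V, ∀ t ∈ V, 2 * s - t ∈ V) {c : ℤ} {d : ℕ} (hd : 0 < d)
    (hc : c ∈ V) (hcd : c + d ∈ V) (hmin : ∀ x ∈ V, ∀ n : ℕ, 0 < n → n < d → x + n ∉ V) :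
    V = {x : ℤ | ∃ j : ℤ, x = c + j * d} := by
  have hline (j : ℤ) : c + j * d ∈ V := by
    simpa using add_zsmul_sub_mem hV hc hcd j
  ext x
  refine ⟨fun hx => ⟨(x - c) / d, ?_⟩, fun ⟨j, hj⟩ => hj ▸ hline j⟩
  have hdiv := Int.emod_add_mul_ediv (x - c) d
  have hr0 : 0 ≤ (x - c) % d := Int.emod_nonneg _ (by omega)
  have hrd : (x - c) % d < d := Int.emod_lt_of_pos _ (by omega)
  by_contra hne
  have hr_pos : 0 < (x - c) % d := by
    refine lt_of_le_of_ne hr0 fun h => hne ?_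
    linarith
  refine hmin _ (hline ((x - c) / d)) ((x - c) % d).toNat (by omega) (by omega) ?_
  convert hx using 1
  rw [Int.toNat_of_nonneg hr0]
  linarith

/-- A modified set of differences in ℤ has at most one element, or its elements
form a complete arithmetic sequence `{c + j·d : j ∈ ℤ}` with `d ≥ 1`. -/
theorem modified_set_of_differences_arithmetic (V : Set ℤ)
    (hV : ∀ s ∈ V, ∀ t ∈ V, 2 * s - t ∈ V) :
    V.Subsingleton ∨ ∃ (c : ℤ) (d : ℕ), 1 ≤ d ∧ V = {x : ℤ | ∃ j : ℤ, x = c + j * d} := by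
  rcases V.subsingleton_or_nontrivial with hsub | ⟨a, ha, b, hb, hab⟩
  · exact Or.inl hsub
  obtain ⟨x, hx, y, hy, hxy⟩ : ∃ x ∈ V, ∃ y ∈ V, x < y := by
    rcases hab.lt_or_gt with h | h
    exacts [⟨a, ha, b, hb, h⟩, ⟨b, hb, a, ha, h⟩]
  have hgap : ∃ n : ℕ, 0 < n ∧ ∃ c ∈ V, c + n ∈ V :=
    ⟨(y - x).toNat, by omega, x, hx, by rwa [Int.toNat_of_nonneg (by omega), add_sub_cancel]⟩
  classical
  obtain ⟨hd, c, hc, hcd⟩ := Nat.find_spec hgap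
  exact Or.inr ⟨c, Nat.find hgap, hd, eq_setOf_add_mul_of_minimal_gap hV hd hc hcd
    fun z hz n hn hnd hzn => Nat.find_min hgap hnd ⟨hn, z, hz, hzn⟩⟩
end

section
/- Let τ : ℤ → ℤ[α,β] be the polynomial Somos-4 sequence. Then τ(5 − n) = τ(n) for all n ∈ ℤ; equivalently, with d = 2n − 5, one has τ(n − d) = τ(n). -/
open MvPolynomial

/-- The polynomial Somos-4 sequence satisfies the symmetry `τ(5 − n) = τ(n)`. -/
theorem somos4_symmetry (τ : ℤ → MvPolynomial (Fin 2) ℤ)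
    (hrec : ∀ n : ℤ, τ (n + 2) * τ (n - 2) =
      X 0 * (τ (n + 1) * τ (n - 1)) + X 1 * (τ n) ^ 2)
    (h1 : τ 1 = 1) (h2 : τ 2 = 1) (h3 : τ 3 = 1) (h4 : τ 4 = 1) :
    ∀ n : ℤ, τ (5 - n) = τ n := by
  -- evaluation at α = 1, β = 0
  set t : ℤ → ℤ := fun n => eval (![1, 0] : Fin 2 → ℤ) (τ n) with ht
  have hrec' : ∀ n : ℤ, t (n + 2) * t (n - 2) = t (n + 1) * t (n - 1) := by
    intro n
    have := congrArg (eval (![1, 0] : Fin 2 → ℤ)) (hrec n)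
    simpa [ht] using this
  have ht1 : t 1 = 1 := by simp [ht, h1]
  have ht2 : t 2 = 1 := by simp [ht, h2]
  have ht3 : t 3 = 1 := by simp [ht, h3]
  have ht4 : t 4 = 1 := by simp [ht, h4]
  have hup : ∀ k : ℕ, t (1 + k) = 1 ∧ t (2 + k) = 1 ∧ t (3 + k) = 1 ∧ t (4 + k) = 1 := by
    intro k
    induction k with
    | zero => norm_num [ht1, ht2, ht3, ht4]
    | succ k ih =>
      obtain ⟨e1, e2, e3, e4⟩ := ih
      have e := hrec' (3 + k)
      rw [show (3 + (k:ℤ) + 2) = 4 + (k + 1) by ring, show (3 + (k:ℤ) - 2) = 1 + k by ring,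
        show (3 + (k:ℤ) + 1) = 4 + k by ring, show (3 + (k:ℤ) - 1) = 2 + k by ring] at e
      rw [e1, e2, e4, mul_one, one_mul] at e
      refine ⟨?_, ?_, ?_, e⟩ <;> push_cast
      · rw [show (1 + ((k:ℤ)+1)) = 2 + k by ring]; exact e2
      · rw [show (2 + ((k:ℤ)+1)) = 3 + k by ring]; exact e3
      · rw [show (3 + ((k:ℤ)+1)) = 4 + k by ring]; exact e4
  have hdown : ∀ k : ℕ, t (1 - k) = 1 ∧ t (2 - k) = 1 ∧ t (3 - k) = 1 ∧ t (4 - k) = 1 := by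
    intro k
    induction k with
    | zero => norm_num [ht1, ht2, ht3, ht4]
    | succ k ih =>
      obtain ⟨e1, e2, e3, e4⟩ := ih
      have e := hrec' (2 - k)
      rw [show (2 - (k:ℤ) + 2) = 4 - k by ring, show (2 - (k:ℤ) - 2) = 1 - (k + 1) by ring,
        show (2 - (k:ℤ) + 1) = 3 - k by ring, show (2 - (k:ℤ) - 1) = 1 - k by ring] at e
      rw [e1, e3, e4, mul_one, one_mul] at e
      refine ⟨e, ?_, ?_, ?_⟩ <;> push_cast
      · rw [show (2 - ((k:ℤ)+1)) = 1 - k by ring]; exact e1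
      · rw [show (3 - ((k:ℤ)+1)) = 2 - k by ring]; exact e2
      · rw [show (4 - ((k:ℤ)+1)) = 3 - k by ring]; exact e3
  have hone : ∀ n : ℤ, t n = 1 := by
    intro n
    rcases le_or_gt 1 n with h | h
    · have := (hup (n - 1).toNat).1
      rwa [show (1 + ((n - 1).toNat : ℤ)) = n by rw [Int.toNat_of_nonneg (by omega)]; ring] at this
    · have := (hdown (1 - n).toNat).1
      rwa [show (1 - ((1 - n).toNat : ℤ)) = n by rw [Int.toNat_of_nonneg (by omega)]; ring] at this
  have hne : ∀ n : ℤ, τ n ≠ 0 := by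
    intro n h
    have := hone n
    rw [ht] at this
    simp only [h, map_zero] at this
    exact zero_ne_one this
  -- base computations
  have e2' := hrec 2
  have e3' := hrec 3
  norm_num [h1, h2, h3, h4] at e2' e3'
  -- e2' : τ 0 = X 0 + X 1, e3' : τ 5 = X 0 + X 1 (shapes to check)
  have h05 : τ 0 = τ 5 := by rw [e2', e3']
  have e1' := hrec 1
  have e4' := hrec 4
  norm_num [h1, h2, h3, h4] at e1' e4'
  have hm16 : τ (-1) = τ 6 := by rw [e1', e4', h05]
  have main : ∀ k : ℕ, τ (2 - (k:ℤ)) = τ (3 + k) ∧ τ (1 - (k:ℤ)) = τ (4 + k)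
      ∧ τ (-(k:ℤ)) = τ (5 + k) ∧ τ (-1 - (k:ℤ)) = τ (6 + k) := by
    intro k
    induction k with
    | zero => norm_num [h1, h2, h3, h4, h05, hm16]
    | succ k ih =>
      obtain ⟨p0, p1, p2, p3⟩ := ih
      have eL := hrec (-(k:ℤ))
      rw [show (-(k:ℤ) + 2) = 2 - k by ring, show (-(k:ℤ) - 2) = -1 - (k+1) by ring,
        show (-(k:ℤ) + 1) = 1 - k by ring, show (-(k:ℤ) - 1) = -1 - k by ring] at eL
      rw [p0, p1, p2, p3] at eL
      have eR := hrec (5 + k)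
      rw [show (5 + (k:ℤ) + 2) = 6 + (k+1) by ring, show (5 + (k:ℤ) - 2) = 3 + k by ring,
        show (5 + (k:ℤ) + 1) = 6 + k by ring, show (5 + (k:ℤ) - 1) = 4 + k by ring] at eR
      have key : τ (3 + (k:ℤ)) * τ (-1 - ((k:ℤ)+1)) = τ (3 + (k:ℤ)) * τ (6 + ((k:ℤ)+1)) := by
        linear_combination eL - eR
      have hlast := mul_left_cancel₀ (hne (3 + k)) key
      refine ⟨?_, ?_, ?_, ?_⟩ <;> push_cast
      · rw [show (2 - ((k:ℤ)+1)) = 1 - k by ring, show (3 + ((k:ℤ)+1)) = 4 + k by ring]; exact p1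
      · rw [show (1 - ((k:ℤ)+1)) = -(k:ℤ) by ring, show (4 + ((k:ℤ)+1)) = 5 + k by ring]; exact p2
      · rw [show (-((k:ℤ)+1)) = -1 - k by ring, show (5 + ((k:ℤ)+1)) = 6 + k by ring]; exact p3
      · exact hlast
  intro n
  rcases le_or_gt 3 n with h | h
  · have := (main (n - 3).toNat).1
    rwa [show (2 - ((n - 3).toNat : ℤ)) = 5 - n by rw [Int.toNat_of_nonneg (by omega)]; ring,
      show (3 + ((n - 3).toNat : ℤ)) = n by rw [Int.toNat_of_nonneg (by omega)]; ring] at this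
  · have := (main (2 - n).toNat).1
    rw [show (2 - ((2 - n).toNat : ℤ)) = n by rw [Int.toNat_of_nonneg (by omega)]; ring,
      show (3 + ((2 - n).toNat : ℤ)) = 5 - n by rw [Int.toNat_of_nonneg (by omega)]; ring] at this
    exact this.symm
end

section
/- Let τ : ℤ → ℤ[α,β] be the polynomial Somos-5 sequence. Then τ(6 − n) = τ(n) for all n ∈ ℤ; equivalently, with d = 2n − 6, one has τ(n − d) = τ(n). -/
open MvPolynomial

/-- The polynomial Somos-5 sequence satisfies the symmetry `τ(6 − n) = τ(n)`. -/
theorem somos5_symmetry (τ : ℤ → MvPolynomial (Fin 2) ℤ)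
    (hrec : ∀ n : ℤ, τ (n + 3) * τ (n - 2) =
      X 0 * (τ (n + 2) * τ (n - 1)) + X 1 * (τ (n + 1) * τ n))
    (h1 : τ 1 = 1) (h2 : τ 2 = 1) (h3 : τ 3 = 1) (h4 : τ 4 = 1) (h5 : τ 5 = 1) :
    ∀ n : ℤ, τ (6 - n) = τ n := by
  -- evaluation at α = β = 1
  set f : ℤ → ℤ := fun n => eval (fun _ => (1:ℤ)) (τ n) with hf
  have hfrec : ∀ n : ℤ, f (n+3) * f (n-2) = f (n+2) * f (n-1) + f (n+1) * f n := by
    intro n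
    have := congrArg (eval (fun _ => (1:ℤ))) (hrec n)
    simpa [hf] using this
  have hf1 : f 1 = 1 := by simp [hf, h1]
  have hf2 : f 2 = 1 := by simp [hf, h2]
  have hf3 : f 3 = 1 := by simp [hf, h3]
  have hf4 : f 4 = 1 := by simp [hf, h4]
  have hf5 : f 5 = 1 := by simp [hf, h5]
  -- positivity of f on all of ℤ, by two-sided induction
  have hfpos : ∀ k : ℕ, ∀ n : ℤ, 1 - (k:ℤ) ≤ n → n ≤ 5 + k → 0 < f n := by
    intro k
    induction k with
    | zero =>
      intro n hl hu
      norm_num at hl hu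
      interval_cases n <;> simp [hf1, hf2, hf3, hf4, hf5]
    | succ k ih =>
      intro n hl hu
      push_cast at hl hu
      rcases lt_or_ge n (1 - (k:ℤ)) with h | h
      · have hn : n = -(k:ℤ) := by omega
        have key := hfrec (n + 2)
        have e1 : n + 2 + 3 = n + 5 := by ring
        have e2 : n + 2 - 2 = n := by ring
        have e3 : n + 2 + 2 = n + 4 := by ring
        have e4 : n + 2 - 1 = n + 1 := by ring
        have e5 : n + 2 + 1 = n + 3 := by ring
        rw [e1, e2, e3, e4, e5] at key
        have p1 : 0 < f (n+1) := ih _ (by omega) (by omega)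
        have p2 : 0 < f (n+2) := ih _ (by omega) (by omega)
        have p3 : 0 < f (n+3) := ih _ (by omega) (by omega)
        have p4 : 0 < f (n+4) := ih _ (by omega) (by omega)
        have p5 : 0 < f (n+5) := ih _ (by omega) (by omega)
        nlinarith
      rcases lt_or_ge ((5:ℤ) + k) n with h' | h'
      · have hn : n = 6 + (k:ℤ) := by omega
        have key := hfrec (n - 3)
        have e1 : n - 3 + 3 = n := by ring
        have e2 : n - 3 - 2 = n - 5 := by ring
        have e3 : n - 3 + 2 = n - 1 := by ring
        have e4 : n - 3 - 1 = n - 4 := by ring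
        have e5 : n - 3 + 1 = n - 2 := by ring
        rw [e1, e2, e3, e4, e5] at key
        have p1 : 0 < f (n-1) := ih _ (by omega) (by omega)
        have p2 : 0 < f (n-2) := ih _ (by omega) (by omega)
        have p3 : 0 < f (n-3) := ih _ (by omega) (by omega)
        have p4 : 0 < f (n-4) := ih _ (by omega) (by omega)
        have p5 : 0 < f (n-5) := ih _ (by omega) (by omega)
        nlinarith
      · exact ih n h h'
  have hne : ∀ n : ℤ, τ n ≠ 0 := by
    intro n hzero
    have hpos : 0 < f n := hfpos (n.natAbs + 6) n (by omega) (by omega)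
    rw [hf] at hpos
    simp only [hzero, map_zero] at hpos
    exact lt_irrefl 0 hpos
  -- the reversed sequence satisfies the same recurrence
  have hsrec : ∀ m : ℤ, τ (8 - m) * τ (3 - m) =
      X 0 * (τ (7 - m) * τ (4 - m)) + X 1 * (τ (6 - m) * τ (5 - m)) := by
    intro m
    have h := hrec (5 - m)
    have e1 : (5:ℤ) - m + 3 = 8 - m := by ring
    have e2 : (5:ℤ) - m - 2 = 3 - m := by ring
    have e3 : (5:ℤ) - m + 2 = 7 - m := by ring
    have e4 : (5:ℤ) - m - 1 = 4 - m := by ring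
    have e5 : (5:ℤ) - m + 1 = 6 - m := by ring
    rw [e1, e2, e3, e4, e5] at h
    exact h
  -- main two-sided induction
  have main : ∀ k : ℕ, ∀ n : ℤ, 1 - (k:ℤ) ≤ n → n ≤ 5 + k → τ (6 - n) = τ n := by
    intro k
    induction k with
    | zero =>
      intro n hl hu
      norm_num at hl hu
      interval_cases n
      · rw [show (6:ℤ) - 1 = 5 by norm_num, h5, h1]
      · rw [show (6:ℤ) - 2 = 4 by norm_num, h4, h2]
      · norm_num
      · rw [show (6:ℤ) - 4 = 2 by norm_num, h2, h4]
      · rw [show (6:ℤ) - 5 = 1 by norm_num, h1, h5]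
    | succ k ih =>
      intro n hl hu
      push_cast at hl hu
      -- key claim: τ (6 - m) = τ m for m = 6 + k (equivalently m = -k)
      have key : ∀ m : ℤ, m = 6 + (k:ℤ) → τ (6 - m) = τ m := by
        intro m hm
        have ha := hrec (m - 3)
        have e1 : m - 3 + 3 = m := by ring
        have e2 : m - 3 - 2 = m - 5 := by ring
        have e3 : m - 3 + 2 = m - 1 := by ring
        have e4 : m - 3 - 1 = m - 4 := by ring
        have e5 : m - 3 + 1 = m - 2 := by ring
        rw [e1, e2, e3, e4, e5] at ha
        have hb := hsrec (m - 3)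
        have f1 : (8:ℤ) - (m - 3) = 11 - m := by ring
        have f2 : (3:ℤ) - (m - 3) = 6 - m := by ring
        have f3 : (7:ℤ) - (m - 3) = 10 - m := by ring
        have f4 : (4:ℤ) - (m - 3) = 7 - m := by ring
        have f5 : (6:ℤ) - (m - 3) = 9 - m := by ring
        have f6 : (5:ℤ) - (m - 3) = 8 - m := by ring
        rw [f1, f2, f3, f4, f5, f6] at hb
        -- rewrite the reversed values via the induction hypothesis
        have i1 : τ (11 - m) = τ (m - 5) := by
          have := ih (m - 5) (by omega) (by omega)
          rw [show (6:ℤ) - (m - 5) = 11 - m by ring] at this; exact this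
        have i2 : τ (10 - m) = τ (m - 4) := by
          have := ih (m - 4) (by omega) (by omega)
          rw [show (6:ℤ) - (m - 4) = 10 - m by ring] at this; exact this
        have i3 : τ (9 - m) = τ (m - 3) := by
          have := ih (m - 3) (by omega) (by omega)
          rw [show (6:ℤ) - (m - 3) = 9 - m by ring] at this; exact this
        have i4 : τ (8 - m) = τ (m - 2) := by
          have := ih (m - 2) (by omega) (by omega)
          rw [show (6:ℤ) - (m - 2) = 8 - m by ring] at this; exact this
        have i5 : τ (7 - m) = τ (m - 1) := by
          have := ih (m - 1) (by omega) (by omega)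
          rw [show (6:ℤ) - (m - 1) = 7 - m by ring] at this; exact this
        rw [i1, i2, i3, i4, i5] at hb
        have heq : τ (6 - m) * τ (m - 5) = τ m * τ (m - 5) := by
          rw [mul_comm] at hb
          rw [hb, ha]
          ring
        exact mul_right_cancel₀ (hne (m - 5)) heq
      rcases lt_or_ge n (1 - (k:ℤ)) with h | h
      · have hn : n = -(k:ℤ) := by omega
        have := key (6 + (k:ℤ)) rfl
        rw [show (6:ℤ) - (6 + (k:ℤ)) = -(k:ℤ) by ring] at this
        rw [hn, show (6:ℤ) - -(k:ℤ) = 6 + (k:ℤ) by ring]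
        exact this.symm
      rcases lt_or_ge ((5:ℤ) + k) n with h' | h'
      · exact key n (by omega)
      · exact ih n h h'
  intro n
  exact main (n.natAbs + 6) n (by omega) (by omega)
end

section
/- Let τ : ℤ → ℤ be the integer Somos-4 sequence. Then for every prime p and every k ≥ 1, the set S = {n ∈ ℤ : p^k ∣ τ(n)} either has at most one element or there exist c ∈ ℤ and d ≥ 1 such that S = {c + j·d : j ∈ ℤ}; i.e. the multiples of powers of primes in Somos-4 are equally spaced. -/
namespace Somos4Proof

section Basic

variable {τ : ℤ → ℤ}

/-- Shifted form of the recurrence. -/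
lemma hrec4 (hrec : ∀ n : ℤ, τ (n + 2) * τ (n - 2) = τ (n + 1) * τ (n - 1) + (τ n) ^ 2)
    (n : ℤ) : τ (n + 4) * τ n = τ (n + 3) * τ (n + 1) + τ (n + 2) ^ 2 := by
  have h := hrec (n + 2)
  rw [show n + 2 + 2 = n + 4 by ring, show n + 2 - 2 = n by ring,
    show n + 2 + 1 = n + 3 by ring, show n + 2 - 1 = n + 1 by ring] at h
  exact h

lemma pos_all (hrec : ∀ n : ℤ, τ (n + 2) * τ (n - 2) = τ (n + 1) * τ (n - 1) + (τ n) ^ 2)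
    (h1 : τ 1 = 1) (h2 : τ 2 = 1) (h3 : τ 3 = 1) (h4 : τ 4 = 1) :
    ∀ n : ℤ, 0 < τ n := by
  have key := hrec4 hrec
  have up : ∀ m : ℕ, 0 < τ (1 + m) ∧ 0 < τ (2 + m) ∧ 0 < τ (3 + m) ∧ 0 < τ (4 + m) := by
    intro m
    induction m with
    | zero => norm_num [h1, h2, h3, h4]
    | succ m ih =>
      obtain ⟨p1, p2, p3, p4⟩ := ih
      have h := key (1 + (m : ℤ))
      rw [show (1:ℤ) + m + 4 = 4 + m + 1 by ring, show (1:ℤ) + m + 3 = 4 + m by ring,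
        show (1:ℤ) + m + 2 = 3 + m by ring, show (1:ℤ) + m + 1 = 2 + m by ring] at h
      have p5 : 0 < τ (4 + (m : ℤ) + 1) := by nlinarith [sq_nonneg (τ (3 + (m:ℤ)))]
      refine ⟨?_, ?_, ?_, ?_⟩ <;> push_cast
      · rw [show (1:ℤ) + (m + 1) = 2 + m by ring]; exact p2
      · rw [show (2:ℤ) + (m + 1) = 3 + m by ring]; exact p3
      · rw [show (3:ℤ) + (m + 1) = 4 + m by ring]; exact p4
      · rw [show (4:ℤ) + (m + 1) = 4 + m + 1 by ring]; exact p5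
  have down : ∀ m : ℕ, 0 < τ (4 - m) ∧ 0 < τ (3 - m) ∧ 0 < τ (2 - m) ∧ 0 < τ (1 - m) := by
    intro m
    induction m with
    | zero => norm_num [h1, h2, h3, h4]
    | succ m ih =>
      obtain ⟨p1, p2, p3, p4⟩ := ih
      have h := key (-(m : ℤ))
      rw [show -(m:ℤ) + 4 = 4 - m by ring, show -(m:ℤ) + 3 = 3 - m by ring,
        show -(m:ℤ) + 2 = 2 - m by ring, show -(m:ℤ) + 1 = 1 - m by ring] at h
      have p5 : 0 < τ (-(m : ℤ)) := by nlinarith [sq_nonneg (τ (2 - (m:ℤ)))]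
      refine ⟨?_, ?_, ?_, ?_⟩ <;> push_cast
      · rw [show (4:ℤ) - (m + 1) = 3 - m by ring]; exact p2
      · rw [show (3:ℤ) - (m + 1) = 2 - m by ring]; exact p3
      · rw [show (2:ℤ) - (m + 1) = 1 - m by ring]; exact p4
      · rw [show (1:ℤ) - (m + 1) = -(m:ℤ) by ring]; exact p5
  intro n
  rcases le_or_gt 1 n with hn | hn
  · have : n = 1 + ((n - 1).toNat : ℤ) := by
      rw [Int.toNat_of_nonneg (by omega)]; ring
    rw [this]; exact (up _).1
  · have : n = 1 - ((1 - n).toNat : ℤ) := by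
      rw [Int.toNat_of_nonneg (by omega)]; ring
    rw [this]; exact (down _).2.2.2

variable (hrec : ∀ n : ℤ, τ (n + 2) * τ (n - 2) = τ (n + 1) * τ (n - 1) + (τ n) ^ 2)
  (h1 : τ 1 = 1) (h2 : τ 2 = 1) (h3 : τ 3 = 1) (h4 : τ 4 = 1)

include hrec h1 h2 h3 h4

lemma tau5 : τ 5 = 2 := by
  have h := hrec4 hrec 1
  norm_num [h1, h2, h3, h4] at h
  exact h

lemma tau6 : τ 6 = 3 := by
  have h := hrec4 hrec 2
  norm_num [h2, h3, h4, tau5 hrec h1 h2 h3 h4] at h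
  linarith

/-- Somos-5 relation. -/
lemma s5 : ∀ n : ℤ, τ (n + 5) * τ n + τ (n + 4) * τ (n + 1) - 5 * (τ (n + 3) * τ (n + 2)) = 0 := by
  have pos := pos_all hrec h1 h2 h3 h4
  have nz : ∀ n : ℤ, τ n ≠ 0 := fun n => (pos n).ne'
  have key : ∀ n : ℤ,
      τ (n + 2) * (τ (n + 6) * τ (n + 1) + τ (n + 5) * τ (n + 2) - 5 * (τ (n + 4) * τ (n + 3)))
        = τ (n + 4) * (τ (n + 5) * τ n + τ (n + 4) * τ (n + 1) - 5 * (τ (n + 3) * τ (n + 2))) := by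
    intro n
    have d1 := hrec4 hrec n
    have d2 := hrec4 hrec (n + 2)
    rw [show n + 2 + 4 = n + 6 by ring, show n + 2 + 3 = n + 5 by ring,
      show n + 2 + 2 = n + 4 by ring, show n + 2 + 1 = n + 3 by ring] at d2
    linear_combination (τ (n + 1)) * d2 - (τ (n + 5)) * d1
  have base : τ (1 + 5) * τ 1 + τ (1 + 4) * τ (1 + 1) - 5 * (τ (1 + 3) * τ (1 + 2)) = 0 := by
    norm_num [h1, h2, h3, h4, tau5 hrec h1 h2 h3 h4, tau6 hrec h1 h2 h3 h4]
  have step_up : ∀ n : ℤ,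
      τ (n + 5) * τ n + τ (n + 4) * τ (n + 1) - 5 * (τ (n + 3) * τ (n + 2)) = 0 →
      τ (n + 1 + 5) * τ (n + 1) + τ (n + 1 + 4) * τ (n + 1 + 1)
        - 5 * (τ (n + 1 + 3) * τ (n + 1 + 2)) = 0 := by
    intro n h
    have k := key n
    rw [h, mul_zero] at k
    have := mul_eq_zero.mp k
    rcases this with h' | h'
    · exact absurd h' (nz _)
    · rw [show n + 1 + 5 = n + 6 by ring, show n + 1 + 4 = n + 5 by ring,
        show n + 1 + 1 = n + 2 by ring, show n + 1 + 3 = n + 4 by ring,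
        show n + 1 + 2 = n + 3 by ring]
      exact h'
  have step_down : ∀ n : ℤ,
      τ (n + 1 + 5) * τ (n + 1) + τ (n + 1 + 4) * τ (n + 1 + 1)
        - 5 * (τ (n + 1 + 3) * τ (n + 1 + 2)) = 0 →
      τ (n + 5) * τ n + τ (n + 4) * τ (n + 1) - 5 * (τ (n + 3) * τ (n + 2)) = 0 := by
    intro n h
    have k := key n
    rw [show n + 1 + 5 = n + 6 by ring, show n + 1 + 4 = n + 5 by ring,
      show n + 1 + 1 = n + 2 by ring, show n + 1 + 3 = n + 4 by ring,
      show n + 1 + 2 = n + 3 by ring] at h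
    rw [h, mul_zero] at k
    rcases mul_eq_zero.mp k.symm with h' | h'
    · exact absurd h' (nz _)
    · exact h'
  have up : ∀ m : ℕ, τ (1 + m + 5) * τ (1 + m) + τ (1 + m + 4) * τ (1 + m + 1)
      - 5 * (τ (1 + m + 3) * τ (1 + m + 2)) = 0 := by
    intro m
    induction m with
    | zero => push_cast; convert base using 3 <;> norm_num
    | succ m ih =>
      have := step_up (1 + m) ih
      push_cast
      rw [show (1:ℤ) + (m + 1) = 1 + m + 1 by ring]
      exact this
  have down : ∀ m : ℕ, τ (1 - m + 5) * τ (1 - m) + τ (1 - m + 4) * τ (1 - m + 1)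
      - 5 * (τ (1 - m + 3) * τ (1 - m + 2)) = 0 := by
    intro m
    induction m with
    | zero => push_cast; convert base using 3 <;> norm_num
    | succ m ih =>
      have := step_down (1 - (m + 1 : ℤ)) (by
        rw [show (1:ℤ) - (m + 1) + 1 = 1 - m by ring]; exact ih)
      push_cast
      exact this
  intro n
  rcases le_or_gt 1 n with hn | hn
  · have e : n = 1 + ((n - 1).toNat : ℤ) := by
      rw [Int.toNat_of_nonneg (by omega)]; ring
    rw [e]; exact up _
  · have e : n = 1 - ((1 - n).toNat : ℤ) := by
      rw [Int.toNat_of_nonneg (by omega)]; ring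
    rw [e]; exact down _

/-- The cubic identity used at a zero. -/
lemma zid : ∀ n : ℤ, τ (n + 4) * τ (n + 1) ^ 2 + τ (n + 3) ^ 2 * τ n + τ (n + 2) ^ 3
    - 4 * (τ (n + 3) * τ (n + 2) * τ (n + 1)) = 0 := by
  have pos := pos_all hrec h1 h2 h3 h4
  have nz : ∀ n : ℤ, τ n ≠ 0 := fun n => (pos n).ne'
  have key : ∀ n : ℤ,
      τ (n + 1) * (τ (n + 5) * τ (n + 2) ^ 2 + τ (n + 4) ^ 2 * τ (n + 1) + τ (n + 3) ^ 3
          - 4 * (τ (n + 4) * τ (n + 3) * τ (n + 2)))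
        = τ (n + 4) * (τ (n + 4) * τ (n + 1) ^ 2 + τ (n + 3) ^ 2 * τ n + τ (n + 2) ^ 3
          - 4 * (τ (n + 3) * τ (n + 2) * τ (n + 1))) := by
    intro n
    have d1 := hrec4 hrec n
    have d2 := hrec4 hrec (n + 1)
    rw [show n + 1 + 4 = n + 5 by ring, show n + 1 + 3 = n + 4 by ring,
      show n + 1 + 2 = n + 3 by ring, show n + 1 + 1 = n + 2 by ring] at d2
    linear_combination (τ (n + 2) ^ 2) * d2 - (τ (n + 3) ^ 2) * d1
  have base : τ (1 + 4) * τ (1 + 1) ^ 2 + τ (1 + 3) ^ 2 * τ 1 + τ (1 + 2) ^ 3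
      - 4 * (τ (1 + 3) * τ (1 + 2) * τ (1 + 1)) = 0 := by
    norm_num [h1, h2, h3, h4, tau5 hrec h1 h2 h3 h4]
  have step_up : ∀ n : ℤ,
      (τ (n + 4) * τ (n + 1) ^ 2 + τ (n + 3) ^ 2 * τ n + τ (n + 2) ^ 3
        - 4 * (τ (n + 3) * τ (n + 2) * τ (n + 1)) = 0) →
      τ (n + 1 + 4) * τ (n + 1 + 1) ^ 2 + τ (n + 1 + 3) ^ 2 * τ (n + 1) + τ (n + 1 + 2) ^ 3
        - 4 * (τ (n + 1 + 3) * τ (n + 1 + 2) * τ (n + 1 + 1)) = 0 := by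
    intro n h
    have k := key n
    rw [h, mul_zero] at k
    rcases mul_eq_zero.mp k with h' | h'
    · exact absurd h' (nz _)
    · rw [show n + 1 + 4 = n + 5 by ring, show n + 1 + 3 = n + 4 by ring,
        show n + 1 + 2 = n + 3 by ring, show n + 1 + 1 = n + 2 by ring]
      exact h'
  have step_down : ∀ n : ℤ,
      (τ (n + 1 + 4) * τ (n + 1 + 1) ^ 2 + τ (n + 1 + 3) ^ 2 * τ (n + 1) + τ (n + 1 + 2) ^ 3
        - 4 * (τ (n + 1 + 3) * τ (n + 1 + 2) * τ (n + 1 + 1)) = 0) →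
      τ (n + 4) * τ (n + 1) ^ 2 + τ (n + 3) ^ 2 * τ n + τ (n + 2) ^ 3
        - 4 * (τ (n + 3) * τ (n + 2) * τ (n + 1)) = 0 := by
    intro n h
    have k := key n
    rw [show n + 1 + 4 = n + 5 by ring, show n + 1 + 3 = n + 4 by ring,
      show n + 1 + 2 = n + 3 by ring, show n + 1 + 1 = n + 2 by ring] at h
    rw [h, mul_zero] at k
    rcases mul_eq_zero.mp k.symm with h' | h'
    · exact absurd h' (nz _)
    · exact h'
  have up : ∀ m : ℕ, τ (1 + m + 4) * τ (1 + m + 1) ^ 2 + τ (1 + m + 3) ^ 2 * τ (1 + m)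
      + τ (1 + m + 2) ^ 3 - 4 * (τ (1 + m + 3) * τ (1 + m + 2) * τ (1 + m + 1)) = 0 := by
    intro m
    induction m with
    | zero => push_cast; convert base using 3 <;> norm_num
    | succ m ih =>
      have := step_up (1 + m) ih
      push_cast
      rw [show (1:ℤ) + (m + 1) = 1 + m + 1 by ring]
      exact this
  have down : ∀ m : ℕ, τ (1 - m + 4) * τ (1 - m + 1) ^ 2 + τ (1 - m + 3) ^ 2 * τ (1 - m)
      + τ (1 - m + 2) ^ 3 - 4 * (τ (1 - m + 3) * τ (1 - m + 2) * τ (1 - m + 1)) = 0 := by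
    intro m
    induction m with
    | zero => push_cast; convert base using 3 <;> norm_num
    | succ m ih =>
      have := step_down (1 - (m + 1 : ℤ)) (by
        rw [show (1:ℤ) - (m + 1) + 1 = 1 - m by ring]; exact ih)
      push_cast
      exact this
  intro n
  rcases le_or_gt 1 n with hn | hn
  · have e : n = 1 + ((n - 1).toNat : ℤ) := by
      rw [Int.toNat_of_nonneg (by omega)]; ring
    rw [e]; exact up _
  · have e : n = 1 - ((1 - n).toNat : ℤ) := by
      rw [Int.toNat_of_nonneg (by omega)]; ring
    rw [e]; exact down _

end Basic

section Cop

variable {τ : ℤ → ℤ}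
variable (hrec4 : ∀ n : ℤ, τ (n + 4) * τ n = τ (n + 3) * τ (n + 1) + τ (n + 2) ^ 2)
  (h1 : τ 1 = 1)
  (s5 : ∀ n : ℤ, τ (n + 5) * τ n + τ (n + 4) * τ (n + 1) - 5 * (τ (n + 3) * τ (n + 2)) = 0)
  {r : ℤ} (hr : Prime r)

include hrec4 h1 hr

lemma adj1 : ∀ n : ℤ, r ∣ τ n → r ∣ τ (n + 1) → False := by
  have step_up : ∀ n : ℤ, (r ∣ τ n → r ∣ τ (n + 1) → False) →
      (r ∣ τ (n + 1) → r ∣ τ (n + 1 + 1) → False) := by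
    intro n H d1 d2
    have h := hrec4 (n - 2)
    rw [show n - 2 + 4 = n + 1 + 1 by ring, show n - 2 + 3 = n + 1 by ring,
      show n - 2 + 2 = n by ring, show n - 2 + 1 = n - 1 by ring] at h
    have : r ∣ τ n ^ 2 := by
      have : τ n ^ 2 = τ (n + 1 + 1) * τ (n - 2) - τ (n + 1) * τ (n - 1) := by
        linear_combination -h
      rw [this]
      exact dvd_sub (d2.mul_right _) (d1.mul_right _)
    exact H (hr.dvd_of_dvd_pow this) d1
  have step_down : ∀ n : ℤ, (r ∣ τ (n + 1) → r ∣ τ (n + 1 + 1) → False) →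
      (r ∣ τ n → r ∣ τ (n + 1) → False) := by
    intro n H d1 d2
    have h := hrec4 n
    have : r ∣ τ (n + 2) ^ 2 := by
      have : τ (n + 2) ^ 2 = τ (n + 4) * τ n - τ (n + 3) * τ (n + 1) := by
        linear_combination -h
      rw [this]
      exact dvd_sub (d1.mul_left _) (d2.mul_left _)
    refine H d2 ?_
    rw [show n + 1 + 1 = n + 2 by ring]
    exact hr.dvd_of_dvd_pow this
  have base : r ∣ τ 1 → r ∣ τ (1 + 1) → False := by
    intro d _
    rw [h1] at d
    exact hr.not_unit (isUnit_of_dvd_one d)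
  have up : ∀ m : ℕ, r ∣ τ (1 + m) → r ∣ τ (1 + m + 1) → False := by
    intro m
    induction m with
    | zero => push_cast; simpa using base
    | succ m ih =>
      have := step_up (1 + m) ih
      push_cast
      rw [show (1:ℤ) + (m + 1) = 1 + m + 1 by ring]
      exact this
  have down : ∀ m : ℕ, r ∣ τ (1 - m) → r ∣ τ (1 - m + 1) → False := by
    intro m
    induction m with
    | zero => push_cast; simpa using base
    | succ m ih =>
      have := step_down (1 - (m + 1 : ℤ)) (by
        rw [show (1:ℤ) - (m + 1) + 1 = 1 - m by ring]
        exact ih)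
      push_cast
      exact this
  intro n
  rcases le_or_gt 1 n with hn | hn
  · have e : n = 1 + ((n - 1).toNat : ℤ) := by
      rw [Int.toNat_of_nonneg (by omega)]; ring
    rw [e]; exact up _
  · have e : n = 1 - ((1 - n).toNat : ℤ) := by
      rw [Int.toNat_of_nonneg (by omega)]; ring
    rw [e]; exact down _

lemma adj2 : ∀ n : ℤ, r ∣ τ n → r ∣ τ (n + 2) → False := by
  intro n d1 d2
  have h := hrec4 (n - 2)
  rw [show n - 2 + 4 = n + 2 by ring, show n - 2 + 3 = n + 1 by ring,
    show n - 2 + 2 = n by ring, show n - 2 + 1 = n - 1 by ring] at h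
  have hd : r ∣ τ (n + 1) * τ (n - 1) := by
    have e : τ (n + 1) * τ (n - 1) = τ (n + 2) * τ (n - 2) - τ n ^ 2 := by
      linear_combination -h
    rw [e]
    exact dvd_sub (d2.mul_right _) (dvd_pow d1 (by norm_num))
  rcases hr.dvd_mul.mp hd with h' | h'
  · exact adj1 hrec4 h1 hr n d1 h'
  · refine adj1 hrec4 h1 hr (n - 1) h' ?_
    rw [show n - 1 + 1 = n by ring]
    exact d1

include s5 in
lemma adj3 : ∀ n : ℤ, r ∣ τ n → r ∣ τ (n + 3) → False := by
  intro n d1 d2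
  have h := s5 (n - 2)
  rw [show n - 2 + 5 = n + 3 by ring, show n - 2 + 4 = n + 2 by ring,
    show n - 2 + 3 = n + 1 by ring, show n - 2 + 2 = n by ring,
    show n - 2 + 1 = n - 1 by ring] at h
  have hd : r ∣ τ (n + 2) * τ (n - 1) := by
    have e : τ (n + 2) * τ (n - 1) = 5 * (τ (n + 1) * τ n) - τ (n + 3) * τ (n - 2) := by
      linear_combination h
    rw [e]
    exact dvd_sub ((d1.mul_left _).mul_left _) (d2.mul_right _)
  rcases hr.dvd_mul.mp hd with h' | h'
  · exact adj2 hrec4 h1 hr n d1 h'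
  · refine adj1 hrec4 h1 hr (n - 1) h' ?_
    rw [show n - 1 + 1 = n by ring]
    exact d1

end Cop


lemma unit_cancel {R : Type*} [CommRing R] {u x y : R} (hu : IsUnit u)
    (h : x * u = y * u) : x = y := by
  obtain ⟨w, rfl⟩ := hu
  calc x = x * w * ↑w⁻¹ := by rw [mul_assoc, Units.mul_inv, mul_one]
    _ = y * w * ↑w⁻¹ := by rw [h]
    _ = y := by rw [mul_assoc, Units.mul_inv, mul_one]

section Symm

variable {τ : ℤ → ℤ} {p k : ℕ}

variable (hrec4 : ∀ n : ℤ, τ (n + 4) * τ n = τ (n + 3) * τ (n + 1) + τ (n + 2) ^ 2)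
  (s5 : ∀ n : ℤ, τ (n + 5) * τ n + τ (n + 4) * τ (n + 1) - 5 * (τ (n + 3) * τ (n + 2)) = 0)
  (zid : ∀ n : ℤ, τ (n + 4) * τ (n + 1) ^ 2 + τ (n + 3) ^ 2 * τ n + τ (n + 2) ^ 3
    - 4 * (τ (n + 3) * τ (n + 2) * τ (n + 1)) = 0)
  (hp : p.Prime) (hk : 1 ≤ k)
  (adj1 : ∀ n : ℤ, (p:ℤ) ∣ τ n → (p:ℤ) ∣ τ (n + 1) → False)
  (adj2 : ∀ n : ℤ, (p:ℤ) ∣ τ n → (p:ℤ) ∣ τ (n + 2) → False)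
  (adj3 : ∀ n : ℤ, (p:ℤ) ∣ τ n → (p:ℤ) ∣ τ (n + 3) → False)

include hrec4 s5 zid hp hk adj1 adj2 in
lemma symm_zero (a : ℤ) (ha : (p:ℤ) ^ k ∣ τ a) :
    ∀ n : ℤ, ((p:ℤ) ^ k ∣ τ (a + n) ↔ (p:ℤ) ^ k ∣ τ (a - n)) := by
  haveI : NeZero (p ^ k) := ⟨pow_ne_zero _ hp.ne_zero⟩
  -- dividing by p^k is vanishing in ZMod (p^k)
  have hf0 : ∀ m : ℤ, ((p:ℤ) ^ k ∣ τ m ↔ ((τ m : ZMod (p ^ k)) = 0)) := by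
    intro m
    rw [ZMod.intCast_zmod_eq_zero_iff_dvd]
    constructor <;> intro h <;> [skip; skip] <;>
      · revert h; push_cast; exact id
  -- units
  have funit : ∀ m : ℤ, ¬ (p:ℤ) ∣ τ m → IsUnit ((τ m : ZMod (p ^ k))) := by
    intro m hm
    have hnd : ¬ p ∣ (τ m).natAbs := by
      intro hd
      apply hm
      have : ((p:ℤ)).natAbs ∣ (τ m).natAbs := by simpa using hd
      exact Int.natAbs_dvd_natAbs.mp this
    have hcop : Nat.Coprime (τ m).natAbs (p ^ k) :=
      Nat.Coprime.pow_right _ ((Nat.Prime.coprime_iff_not_dvd hp).mpr hnd).symm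
    have hu : IsUnit (((τ m).natAbs : ZMod (p ^ k))) :=
      (ZMod.isUnit_iff_coprime _ _).mpr hcop
    rcases Int.natAbs_eq (τ m) with he | he
    · rw [he, Int.cast_natCast]; exact hu
    · rw [he, Int.cast_neg, Int.cast_natCast]; exact hu.neg
  -- casts of the identities
  have fhrec : ∀ n : ℤ, ((τ (n + 4) : ZMod (p ^ k))) * ((τ n : ZMod (p ^ k)))
      = ((τ (n + 3) : ZMod (p ^ k))) * ((τ (n + 1) : ZMod (p ^ k)))
        + ((τ (n + 2) : ZMod (p ^ k))) ^ 2 := by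
    intro n
    have h := congrArg (fun z : ℤ => ((z : ZMod (p ^ k)))) (hrec4 n)
    push_cast at h
    exact h
  have fs5 : ∀ n : ℤ, ((τ (n + 5) : ZMod (p ^ k))) * ((τ n : ZMod (p ^ k)))
      + ((τ (n + 4) : ZMod (p ^ k))) * ((τ (n + 1) : ZMod (p ^ k)))
      - 5 * (((τ (n + 3) : ZMod (p ^ k))) * ((τ (n + 2) : ZMod (p ^ k)))) = 0 := by
    intro n
    have h := congrArg (fun z : ℤ => ((z : ZMod (p ^ k)))) (s5 n)
    push_cast at h
    exact h
  have fzid : ∀ n : ℤ, ((τ (n + 4) : ZMod (p ^ k))) * ((τ (n + 1) : ZMod (p ^ k))) ^ 2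
      + ((τ (n + 3) : ZMod (p ^ k))) ^ 2 * ((τ n : ZMod (p ^ k)))
      + ((τ (n + 2) : ZMod (p ^ k))) ^ 3
      - 4 * (((τ (n + 3) : ZMod (p ^ k))) * ((τ (n + 2) : ZMod (p ^ k)))
          * ((τ (n + 1) : ZMod (p ^ k)))) = 0 := by
    intro n
    have h := congrArg (fun z : ℤ => ((z : ZMod (p ^ k)))) (zid n)
    push_cast at h
    exact h
  -- basic divisibility facts at the zero
  have pa : (p:ℤ) ∣ τ a := dvd_trans (dvd_pow_self (p:ℤ) (by omega)) ha
  have nd1 : ¬ (p:ℤ) ∣ τ (a + 1) := fun h => adj1 a pa h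
  have nd1' : ¬ (p:ℤ) ∣ τ (a - 1) := fun h => adj1 (a - 1) h (by
    rw [show a - 1 + 1 = a by ring]; exact pa)
  have nd2' : ¬ (p:ℤ) ∣ τ (a - 2) := fun h => adj2 (a - 2) h (by
    rw [show a - 2 + 2 = a by ring]; exact pa)
  have u1 : IsUnit ((τ (a + 1) : ZMod (p ^ k))) := funit _ nd1
  have u1' : IsUnit ((τ (a - 1) : ZMod (p ^ k))) := funit _ nd1'
  have u2' : IsUnit ((τ (a - 2) : ZMod (p ^ k))) := funit _ nd2'
  have fa0 : ((τ a : ZMod (p ^ k))) = 0 := (hf0 a).mp ha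
  -- the unit V
  obtain ⟨V, hV⟩ : ∃ V : (ZMod (p ^ k))ˣ,
      (V : ZMod (p ^ k)) * ((τ (a - 1) : ZMod (p ^ k))) = -((τ (a + 1) : ZMod (p ^ k))) := by
    refine ⟨u1.neg.unit * u1'.unit⁻¹, ?_⟩
    rw [Units.val_mul, mul_assoc]
    nth_rewrite 2 [← u1'.unit_spec]
    rw [Units.inv_mul, mul_one, u1.neg.unit_spec]
  -- the main reflection congruence
  have M : ∀ n : ℕ, ((τ (a + (n:ℤ)) : ZMod (p ^ k)))
      = -((V : ZMod (p ^ k)) ^ n * ((τ (a - (n:ℤ)) : ZMod (p ^ k)))) := by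
    intro n
    induction n using Nat.strong_induction_on with
    | _ n ih =>
      rcases n with _ | _ | _ | _ | _ | m
      · -- n = 0
        norm_num [fa0]
      · -- n = 1
        push_cast
        rw [pow_one, hV, neg_neg]
      · -- n = 2
        push_cast
        have e1 := fhrec (a - 2)
        rw [show a - 2 + 4 = a + 2 by ring, show a - 2 + 3 = a + 1 by ring,
          show a - 2 + 2 = a by ring, show a - 2 + 1 = a - 1 by ring, fa0] at e1
        have ez := fzid (a - 3)
        rw [show a - 3 + 4 = a + 1 by ring, show a - 3 + 3 = a by ring,
          show a - 3 + 2 = a - 1 by ring, show a - 3 + 1 = a - 2 by ring, fa0] at ez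
        apply unit_cancel (u2'.mul (u1'.pow 2))
        linear_combination (((τ (a-1) : ZMod (p ^ k)))^2) * e1
          + ((τ (a+1) : ZMod (p ^ k))) * ez
          + (((τ (a-2) : ZMod (p ^ k)))^2
              * ((V : ZMod (p ^ k)) * ((τ (a-1) : ZMod (p ^ k))) - ((τ (a+1) : ZMod (p ^ k))))) * hV
      · -- n = 3
        push_cast
        have e1 := fhrec (a - 1)
        rw [show a - 1 + 4 = a + 3 by ring, show a - 1 + 3 = a + 2 by ring,
          show a - 1 + 2 = a + 1 by ring, show a - 1 + 1 = a by ring, fa0] at e1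
        have e2 := fhrec (a - 3)
        rw [show a - 3 + 4 = a + 1 by ring, show a - 3 + 3 = a by ring,
          show a - 3 + 2 = a - 1 by ring, show a - 3 + 1 = a - 2 by ring, fa0] at e2
        apply unit_cancel (u1'.mul u1)
        linear_combination ((τ (a+1) : ZMod (p ^ k))) * e1
          + ((V : ZMod (p ^ k))^3 * ((τ (a-1) : ZMod (p ^ k)))) * e2
          + (((τ (a+1) : ZMod (p ^ k)))^2
              - (V : ZMod (p ^ k)) * ((τ (a-1) : ZMod (p ^ k))) * ((τ (a+1) : ZMod (p ^ k)))
              + (V : ZMod (p ^ k))^2 * ((τ (a-1) : ZMod (p ^ k)))^2) * hV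
      · -- n = 4
        have C2 := ih 2 (by omega)
        push_cast at C2 ⊢
        have e1 := fs5 (a - 1)
        rw [show a - 1 + 5 = a + 4 by ring, show a - 1 + 4 = a + 3 by ring,
          show a - 1 + 3 = a + 2 by ring, show a - 1 + 2 = a + 1 by ring,
          show a - 1 + 1 = a by ring, fa0] at e1
        have e2 := fs5 (a - 4)
        rw [show a - 4 + 5 = a + 1 by ring, show a - 4 + 4 = a by ring,
          show a - 4 + 3 = a - 1 by ring, show a - 4 + 2 = a - 2 by ring,
          show a - 4 + 1 = a - 3 by ring, fa0] at e2
        apply unit_cancel (u1'.mul u1)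
        linear_combination ((τ (a+1) : ZMod (p ^ k))) * e1
          + ((V : ZMod (p ^ k))^4 * ((τ (a-1) : ZMod (p ^ k)))) * e2
          + (5 * ((τ (a+1) : ZMod (p ^ k)))^2) * C2
          + (5 * (V : ZMod (p ^ k))^2 * ((τ (a-2) : ZMod (p ^ k)))
              * ((V : ZMod (p ^ k)) * ((τ (a-1) : ZMod (p ^ k))) - ((τ (a+1) : ZMod (p ^ k))))) * hV
      · -- n = m + 5
        rw [show m + 1 + 1 + 1 + 1 + 1 = m + 5 from by omega]
        have i0 := ih m (by omega)
        have i1 := ih (m+1) (by omega)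
        have i2 := ih (m+2) (by omega)
        have i3 := ih (m+3) (by omega)
        have i4 := ih (m+4) (by omega)
        push_cast at i0 i1 i2 i3 i4 ⊢
        rw [show a + ((m:ℤ)+1) = a + m + 1 by ring, show a - ((m:ℤ)+1) = a - m - 1 by ring] at i1
        rw [show a + ((m:ℤ)+2) = a + m + 2 by ring, show a - ((m:ℤ)+2) = a - m - 2 by ring] at i2
        rw [show a + ((m:ℤ)+3) = a + m + 3 by ring, show a - ((m:ℤ)+3) = a - m - 3 by ring] at i3
        rw [show a + ((m:ℤ)+4) = a + m + 4 by ring, show a - ((m:ℤ)+4) = a - m - 4 by ring] at i4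
        rw [show a + ((m:ℤ)+5) = a + m + 5 by ring, show a - ((m:ℤ)+5) = a - m - 5 by ring]
        by_cases hz : (p:ℤ) ∣ τ (a + m + 1)
        · -- case B : crossing a zero, use the Somos-5 relation
          have hz0 : ¬ (p:ℤ) ∣ τ (a + m) := fun h => adj1 (a + m) h hz
          have uB := funit _ hz0
          have e1 := fs5 (a + m)
          rw [show a + (m:ℤ) + 5 = a + m + 5 by ring] at e1
          have e2 := fs5 (a - m - 5)
          rw [show a - (m:ℤ) - 5 + 5 = a - m by ring, show a - (m:ℤ) - 5 + 4 = a - m - 1 by ring,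
            show a - (m:ℤ) - 5 + 3 = a - m - 2 by ring, show a - (m:ℤ) - 5 + 2 = a - m - 3 by ring,
            show a - (m:ℤ) - 5 + 1 = a - m - 4 by ring] at e2
          apply unit_cancel uB
          linear_combination e1
            + ((V : ZMod (p ^ k))^(m+5) * ((τ (a - m - 5) : ZMod (p ^ k)))) * i0
            - (V : ZMod (p ^ k))^(2*m+5) * e2
            - ((τ (a + m + 1) : ZMod (p ^ k))) * i4
            + ((V : ZMod (p ^ k))^(m+4) * ((τ (a - m - 4) : ZMod (p ^ k)))) * i1
            + (5 * ((τ (a + m + 2) : ZMod (p ^ k)))) * i3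
            - (5 * (V : ZMod (p ^ k))^(m+3) * ((τ (a - m - 3) : ZMod (p ^ k)))) * i2
        · -- case A : ordinary step with the Somos-4 relation
          have uA := funit _ hz
          have e1 := fhrec (a + m + 1)
          rw [show a + (m:ℤ) + 1 + 4 = a + m + 5 by ring,
            show a + (m:ℤ) + 1 + 3 = a + m + 4 by ring,
            show a + (m:ℤ) + 1 + 2 = a + m + 3 by ring,
            show a + (m:ℤ) + 1 + 1 = a + m + 2 by ring] at e1
          have e2 := fhrec (a - m - 5)
          rw [show a - (m:ℤ) - 5 + 4 = a - m - 1 by ring,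
            show a - (m:ℤ) - 5 + 3 = a - m - 2 by ring,
            show a - (m:ℤ) - 5 + 2 = a - m - 3 by ring,
            show a - (m:ℤ) - 5 + 1 = a - m - 4 by ring] at e2
          apply unit_cancel uA
          linear_combination e1
            + ((V : ZMod (p ^ k))^(m+5) * ((τ (a - m - 5) : ZMod (p ^ k)))) * i1
            - (V : ZMod (p ^ k))^(2*m+6) * e2
            + ((τ (a + m + 2) : ZMod (p ^ k))) * i4
            - ((V : ZMod (p ^ k))^(m+4) * ((τ (a - m - 4) : ZMod (p ^ k)))) * i2
            + (((τ (a + m + 3) : ZMod (p ^ k)))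
                - (V : ZMod (p ^ k))^(m+3) * ((τ (a - m - 3) : ZMod (p ^ k)))) * i3
  -- wrap up : symmetry of the zero set
  intro n
  rcases le_or_gt 0 n with hn | hn
  · have E := M n.toNat
    rw [Int.toNat_of_nonneg hn] at E
    rw [hf0, hf0, E]
    constructor
    · intro h
      have h2 : ((V ^ n.toNat : (ZMod (p ^ k))ˣ) : ZMod (p ^ k))
          * ((τ (a - n) : ZMod (p ^ k))) = 0 := by
        rw [Units.val_pow_eq_pow_val]; rwa [neg_eq_zero] at h
      exact (V ^ n.toNat).mul_right_eq_zero.mp h2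
    · intro h
      rw [h, mul_zero, neg_zero]
  · have E := M (-n).toNat
    rw [Int.toNat_of_nonneg (by omega)] at E
    rw [show a + -n = a - n by ring, show a - -n = a + n by ring] at E
    rw [hf0, hf0, E]
    constructor
    · intro h
      rw [h, mul_zero, neg_zero]
    · intro h
      have h2 : ((V ^ (-n).toNat : (ZMod (p ^ k))ˣ) : ZMod (p ^ k))
          * ((τ (a + n) : ZMod (p ^ k))) = 0 := by
        rw [Units.val_pow_eq_pow_val]; rwa [neg_eq_zero] at h
      exact (V ^ (-n).toNat).mul_right_eq_zero.mp h2

end Symm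


end Somos4Proof

open Somos4Proof in
/-- In the integer Somos-4 sequence, the multiples of powers of primes are
equally spaced: for every prime `p` and `k ≥ 1`, the set `{n : p^k ∣ τ(n)}`
has at most one element or is a complete arithmetic sequence. -/
theorem somos4_prime_powers_equally_spaced (τ : ℤ → ℤ)
    (hrec : ∀ n : ℤ, τ (n + 2) * τ (n - 2) = τ (n + 1) * τ (n - 1) + (τ n) ^ 2)
    (h1 : τ 1 = 1) (h2 : τ 2 = 1) (h3 : τ 3 = 1) (h4 : τ 4 = 1)
    (p : ℕ) (hp : p.Prime) (k : ℕ) (hk : 1 ≤ k) :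
    {n : ℤ | (p : ℤ) ^ k ∣ τ n}.Subsingleton ∨
      ∃ (c d : ℤ), 1 ≤ d ∧ {n : ℤ | (p : ℤ) ^ k ∣ τ n} = {x : ℤ | ∃ j : ℤ, x = c + j * d} := by
  classical
  by_cases hsub : {n : ℤ | (p : ℤ) ^ k ∣ τ n}.Subsingleton
  · exact Or.inl hsub
  right
  have hrec4' : ∀ n : ℤ, τ (n + 4) * τ n = τ (n + 3) * τ (n + 1) + τ (n + 2) ^ 2 :=
    hrec4 hrec
  have s5' := s5 hrec h1 h2 h3 h4
  have zid' := zid hrec h1 h2 h3 h4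
  have hpz : Prime (p : ℤ) := Nat.prime_iff_prime_int.mp hp
  have A1 := adj1 hrec4' h1 hpz
  have A2 := adj2 hrec4' h1 hpz
  have SYM : ∀ a : ℤ, (p:ℤ) ^ k ∣ τ a →
      ∀ n : ℤ, ((p:ℤ) ^ k ∣ τ (a + n) ↔ (p:ℤ) ^ k ∣ τ (a - n)) :=
    fun a ha => symm_zero hrec4' s5' zid' hp hk A1 A2 a ha
  rw [Set.not_subsingleton_iff] at hsub
  obtain ⟨x, hx, y, hy, hxy⟩ := hsub
  simp only [Set.mem_setOf_eq] at hx hy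
  -- the set of realized positive gaps
  have hne : ({d : ℕ | 0 < d ∧ ∃ s : ℤ, (p:ℤ) ^ k ∣ τ s ∧ (p:ℤ) ^ k ∣ τ (s + d)}).Nonempty := by
    rcases lt_trichotomy x y with h | h | h
    · refine ⟨(y - x).toNat, by omega, x, hx, ?_⟩
      rw [Int.toNat_of_nonneg (by omega), show x + (y - x) = y by ring]
      exact hy
    · exact absurd h hxy
    · refine ⟨(x - y).toNat, by omega, y, hy, ?_⟩
      rw [Int.toNat_of_nonneg (by omega), show y + (x - y) = x by ring]
      exact hx
  obtain ⟨hdpos, s₀, hs₀, hs₀d⟩ := Nat.sInf_mem hne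
  set d₀ : ℕ := sInf {d : ℕ | 0 < d ∧ ∃ s : ℤ, (p:ℤ) ^ k ∣ τ s ∧ (p:ℤ) ^ k ∣ τ (s + d)} with hd₀
  have hd0 : (0:ℤ) < (d₀ : ℤ) := by exact_mod_cast hdpos
  -- the whole progression s₀ + ℤ·d₀ consists of multiples
  have up2 : ∀ j : ℕ, ((p:ℤ) ^ k ∣ τ (s₀ + (j:ℤ) * d₀)) ∧
      ((p:ℤ) ^ k ∣ τ (s₀ + ((j:ℤ) + 1) * d₀)) := by
    intro j
    induction j with
    | zero =>
      constructor
      · simpa using hs₀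
      · norm_num
        exact hs₀d
    | succ j ih =>
      obtain ⟨c0, c1⟩ := ih
      constructor
      · push_cast
        exact c1
      · push_cast
        rw [show s₀ + ((j:ℤ) + 1 + 1) * d₀ = (s₀ + ((j:ℤ) + 1) * d₀) + d₀ by ring]
        refine (SYM (s₀ + ((j:ℤ) + 1) * d₀) c1 (d₀ : ℤ)).mpr ?_
        rw [show s₀ + ((j:ℤ) + 1) * d₀ - d₀ = s₀ + (j:ℤ) * d₀ by ring]
        exact c0
  have all : ∀ j : ℤ, (p:ℤ) ^ k ∣ τ (s₀ + j * d₀) := by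
    intro j
    rcases le_or_gt 0 j with hj | hj
    · have := (up2 j.toNat).1
      rwa [Int.toNat_of_nonneg hj] at this
    · have h' := (up2 (-j).toNat).1
      rw [Int.toNat_of_nonneg (by omega)] at h'
      have := (SYM s₀ hs₀ (-j * d₀)).mp (by
        rwa [show s₀ + -j * d₀ = s₀ + -j * d₀ from rfl] at h')
      rwa [show s₀ - -j * d₀ = s₀ + j * d₀ by ring] at this
  refine ⟨s₀, (d₀ : ℤ), by omega, ?_⟩
  ext t
  simp only [Set.mem_setOf_eq]
  constructor
  · intro ht
    have hdiv := Int.mul_ediv_add_emod (t - s₀) (d₀ : ℤ)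
    have hr0 : 0 ≤ (t - s₀) % (d₀ : ℤ) := Int.emod_nonneg _ (by omega)
    have hrlt : (t - s₀) % (d₀ : ℤ) < (d₀ : ℤ) := Int.emod_lt_of_pos _ hd0
    rcases eq_or_lt_of_le hr0 with hzero | hposr
    · refine ⟨(t - s₀) / (d₀ : ℤ), ?_⟩
      linear_combination -hdiv - hzero
    · exfalso
      have hmem : ((t - s₀) % (d₀ : ℤ)).toNat ∈
          {d : ℕ | 0 < d ∧ ∃ s : ℤ, (p:ℤ) ^ k ∣ τ s ∧ (p:ℤ) ^ k ∣ τ (s + d)} := by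
        refine ⟨by omega, s₀ + ((t - s₀) / (d₀ : ℤ)) * d₀, all _, ?_⟩
        rw [Int.toNat_of_nonneg hr0]
        rw [show s₀ + ((t - s₀) / (d₀ : ℤ)) * d₀ + (t - s₀) % (d₀ : ℤ) = t by
          linear_combination hdiv]
        exact ht
      have := Nat.sInf_le hmem
      rw [← hd₀] at this
      omega
  · rintro ⟨j, rfl⟩
    exact all j
end

section
/- Let τ : ℤ → ℤ[α,β] be the polynomial Somos-4 sequence. Then for every n ∈ ℤ, neither the variable α nor the variable β divides τ(n) in ℤ[α,β]. -/
open MvPolynomial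

/-!
Under any specialisation `α ↦ c₀`, `β ↦ c₁` with `c₀ + c₁ = 1`, the Somos-4 recurrence is
satisfied by the constant sequence `1`, and since it determines the sequence from four
consecutive terms, the specialised `τ` is identically `1`. Specialising at `(α, β) = (0, 1)`
and `(1, 0)` shows that `τ n` does not vanish where `α`, resp. `β`, does.
-/

section Somos4

variable {R : Type*} [CommSemiring R] {a : ℤ → R} {c₀ c₁ : R}

theorem somos4_eq_one (hc : c₀ + c₁ = 1)
    (hrec : ∀ n, a (n + 2) * a (n - 2) = c₀ * (a (n + 1) * a (n - 1)) + c₁ * a n ^ 2)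
    (h1 : a 1 = 1) (h2 : a 2 = 1) (h3 : a 3 = 1) (h4 : a 4 = 1) (n : ℤ) : a n = 1 := by
  have hrec' : ∀ n, a (n + 4) * a n = c₀ * (a (n + 3) * a (n + 1)) + c₁ * a (n + 2) ^ 2 := by
    intro n
    have h := hrec (n + 2)
    rwa [show n + 2 + 2 = n + 4 by ring, show n + 2 - 2 = n by ring,
      show n + 2 + 1 = n + 3 by ring, show n + 2 - 1 = n + 1 by ring] at h
  let window : ℤ → Prop := fun n =>
    a n = 1 ∧ a (n + 1) = 1 ∧ a (n + 2) = 1 ∧ a (n + 3) = 1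
  have step_up : ∀ n, window n → window (n + 1) := by
    rintro n ⟨e0, e1, e2, e3⟩
    have e4 : a (n + 4) = 1 := by simpa [e0, e1, e2, e3, hc] using hrec' n
    exact ⟨e1, add_assoc n 1 1 ▸ e2, add_assoc n 1 2 ▸ e3, add_assoc n 1 3 ▸ e4⟩
  have step_down : ∀ n, window (n + 1) → window n := by
    rintro n ⟨e1, e2, e3, e4⟩
    norm_num [add_assoc] at e2 e3 e4
    have e0 : a n = 1 := by simpa [e1, e2, e3, e4, hc] using hrec' n
    exact ⟨e0, e1, e2, e3⟩
  have base : window 1 := ⟨h1, h2, h3, h4⟩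
  have : window n := Int.inductionOn' n 1 base (fun k _ => step_up k)
    (fun k _ hk => step_down (k - 1) (by rwa [sub_add_cancel]))
  exact this.1

end Somos4

theorem MvPolynomial.not_X_dvd_of_eval_ne_zero {σ R : Type*} [CommSemiring R]
    {p : MvPolynomial σ R} {i : σ} (f : σ → R) (hfi : f i = 0) (hp : eval f p ≠ 0) :
    ¬ X i ∣ p := by
  rintro ⟨q, rfl⟩
  simp [hfi] at hp

/-- Neither the variable `α` nor the variable `β` divides any term of the
polynomial Somos-4 sequence. -/
theorem somos4_vars_not_dvd (τ : ℤ → MvPolynomial (Fin 2) ℤ)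
    (hrec : ∀ n : ℤ, τ (n + 2) * τ (n - 2) =
      X 0 * (τ (n + 1) * τ (n - 1)) + X 1 * (τ n) ^ 2)
    (h1 : τ 1 = 1) (h2 : τ 2 = 1) (h3 : τ 3 = 1) (h4 : τ 4 = 1) :
    ∀ n : ℤ, ¬ (X 0 ∣ τ n) ∧ ¬ (X 1 ∣ τ n) := by
  have eval_ne_zero (f : Fin 2 → ℤ) (hf : f 0 + f 1 = 1) (n : ℤ) : eval f (τ n) ≠ 0 := by
    rw [somos4_eq_one (a := fun n => eval f (τ n)) hf
      (fun n => by simpa using congrArg (eval f) (hrec n)) (by simp [h1]) (by simp [h2])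
      (by simp [h3]) (by simp [h4]) n]
    exact one_ne_zero
  exact fun n => ⟨not_X_dvd_of_eval_ne_zero ![0, 1] rfl (eval_ne_zero _ rfl n),
    not_X_dvd_of_eval_ne_zero ![1, 0] rfl (eval_ne_zero _ rfl n)⟩
end

section
/- Let a : ℤ → ℤ satisfy the Ward recurrence families: for all m, n ∈ ℤ, a(m+n)·a(m−n) = a(n)²·a(m−1)·a(m+1) − a(n−1)·a(n+1)·a(m)², and a(1)·a(2)·a(m+n+1)·a(m−n) = a(n)·a(n+1)·a(m−1)·a(m+2) − a(n−1)·a(n+2)·a(m)·a(m+1). Suppose moreover that consecutive terms are coprime: for all n ∈ ℤ, IsCoprime (a(n)) (a(n+1)) in ℤ. Then for every prime p and every k ≥ 1, the set S = {n ∈ ℤ : p^k ∣ a(n)} either has at most one element or there exist c ∈ ℤ and d ≥ 1 such that S = {c + j·d : j ∈ ℤ}; i.e. in an elliptic divisibility sequence whose subsequent values are coprime, the multiples of powers of primes are equally spaced. -/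
/-!
Let `v` be the `p`-adic valuation, `p ^ k ∣ a n` and `v (a x) < k`. In Ward's identity
`a (x + n) * a (x - n) = a n ^ 2 * (…) - a (n - 1) * a (n + 1) * a x ^ 2` the first term has
valuation at least `2 k`, and `a (n ± 1)` are prime to `p` because consecutive terms are coprime;
hence `v (a (x + n)) + v (a (x - n)) = 2 v (a x)`. If `p ^ k` divided `a m` and `a n` but not
`a (m + n)`, the valuations of `a (m + n), a (m + 2 n), a (m + 3 n), …` would therefore decrease
strictly forever. So the indices `n` with `p ^ k ∣ a n` are closed under addition, and under
negation since `a (-n) = a (-1) * a 1 * a n`: they form a subgroup `d ℤ` of `ℤ`.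
-/

def WardRecurrence {R : Type*} [CommRing R] (a : ℤ → R) : Prop :=
  ∀ m n : ℤ, a (m + n) * a (m - n) =
    a n ^ 2 * (a (m - 1) * a (m + 1)) - a (n - 1) * a (n + 1) * a m ^ 2

namespace WardRecurrence

variable {R : Type*} [CommRing R] [IsDomain R] {a : ℤ → R}

theorem apply_zero (h : WardRecurrence a) : a 0 = 0 := by
  have h00 := h 0 0
  simp only [add_zero, zero_sub, sub_self] at h00
  exact mul_self_eq_zero.mp (by linear_combination h00)

theorem apply_neg (h : WardRecurrence a) (hcop : ∀ n, IsCoprime (a n) (a (n + 1))) (n : ℤ) :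
    a (-n) = a (-1) * a 1 * a n := by
  have hu : a (-1) * a 1 ≠ 0 := by
    have h0 := hcop 0
    have h1 := hcop (-1)
    rw [h.apply_zero] at h0
    rw [neg_add_cancel, h.apply_zero] at h1
    simp only [zero_add] at h0
    exact mul_ne_zero (isCoprime_zero_right.mp h1).ne_zero (isCoprime_zero_left.mp h0).ne_zero
  have hpos := h 0 n
  have hneg := h 0 (-n)
  simp only [zero_add, zero_sub, sub_neg_eq_add, h.apply_zero] at hpos hneg
  rcases eq_or_ne (a n) 0 with hn | hn
  · rw [hn, mul_zero]
    rw [hn, mul_zero] at hneg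
    have : a (-n) ^ 2 * (a (-1) * a 1) = 0 := by linear_combination -hneg
    exact eq_zero_of_pow_eq_zero ((mul_eq_zero.mp this).resolve_right hu)
  · exact mul_left_cancel₀ hn (by linear_combination hpos)

theorem emultiplicity_apply_add_add_emultiplicity_apply_sub (h : WardRecurrence a)
    (hcop : ∀ n, IsCoprime (a n) (a (n + 1))) {p : R} (hp : Prime p) {k : ℕ} {n x : ℤ}
    (hn : p ^ k ∣ a n) (hx : emultiplicity p (a x) < k) :
    emultiplicity p (a (x + n)) + emultiplicity p (a (x - n)) = 2 * emultiplicity p (a x) := by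
  obtain ⟨d, hd⟩ := ENat.ne_top_iff_exists.mp (hx.trans (ENat.natCast_lt_top k)).ne
  rw [← hd] at hx ⊢
  have hdk : d < k := by exact_mod_cast hx
  have hpn : p ∣ a n := (dvd_pow_self p (by omega)).trans hn
  have hcop_prev : ¬ p ∣ a (n - 1) := fun hdvd =>
    hp.not_isUnit ((sub_add_cancel n 1 ▸ hcop (n - 1)).isUnit_of_dvd' hdvd hpn)
  have hcop_next : ¬ p ∣ a (n + 1) := fun hdvd =>
    hp.not_isUnit ((hcop n).isUnit_of_dvd' hpn hdvd)
  have hsubtrahend : emultiplicity p (a (n - 1) * a (n + 1) * a x ^ 2) = 2 * d := by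
    rw [emultiplicity_mul hp, emultiplicity_mul hp, emultiplicity_pow hp,
      emultiplicity_eq_zero.mpr hcop_prev, emultiplicity_eq_zero.mpr hcop_next, ← hd]
    simp
  have hminuend : 2 * d < emultiplicity p (a n ^ 2 * (a (x - 1) * a (x + 1))) := by
    have h2k : p ^ (2 * k) ∣ a n ^ 2 := by
      rw [mul_comm, pow_mul]
      exact pow_dvd_pow_of_dvd hn 2
    refine lt_of_lt_of_le ?_ (pow_dvd_iff_le_emultiplicity.mp (dvd_mul_of_dvd_left h2k _))
    exact_mod_cast (by omega : 2 * d < 2 * k)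
  rw [← emultiplicity_mul hp, h x n, emultiplicity_sub_of_gt (hsubtrahend ▸ hminuend),
    hsubtrahend]

theorem not_emultiplicity_apply_lt_emultiplicity_apply_sub (h : WardRecurrence a)
    (hcop : ∀ n, IsCoprime (a n) (a (n + 1))) {p : R} (hp : Prime p) {k : ℕ} {n : ℤ}
    (hn : p ^ k ∣ a n) (x : ℤ) (hx : emultiplicity p (a x) < k) :
    ¬ emultiplicity p (a x) < emultiplicity p (a (x - n)) := by
  induction hex : emultiplicity p (a x) using WellFoundedLT.induction generalizing x with
  | ind e ih =>
    subst hex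
    intro hlt
    have hfin : emultiplicity p (a x) ≠ ⊤ := (hx.trans (ENat.natCast_lt_top k)).ne
    have hsum := h.emultiplicity_apply_add_add_emultiplicity_apply_sub hcop hp hn hx
    have hdesc : emultiplicity p (a (x + n)) < emultiplicity p (a x) := by
      by_contra! hge
      have := calc
        emultiplicity p (a x) + emultiplicity p (a x)
            < emultiplicity p (a x) + emultiplicity p (a (x - n)) :=
          (ENat.add_lt_add_iff_left hfin).mpr hlt
        _ ≤ emultiplicity p (a (x + n)) + emultiplicity p (a (x - n)) := by gcongr
      rw [hsum, two_mul] at this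
      exact lt_irrefl _ this
    exact ih _ hdesc (x + n) (hdesc.trans hx) rfl (by rwa [add_sub_cancel_right])

theorem pow_dvd_apply_add (h : WardRecurrence a) (hcop : ∀ n, IsCoprime (a n) (a (n + 1)))
    {p : R} (hp : Prime p) {k : ℕ} {m n : ℤ} (hm : p ^ k ∣ a m) (hn : p ^ k ∣ a n) :
    p ^ k ∣ a (m + n) := by
  by_contra hmn
  rw [pow_dvd_iff_le_emultiplicity, not_le] at hmn
  refine h.not_emultiplicity_apply_lt_emultiplicity_apply_sub hcop hp hn (m + n) hmn ?_
  rw [add_sub_cancel_right]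
  exact hmn.trans_le (pow_dvd_iff_le_emultiplicity.mp hm)

def powDvdAddSubgroup (h : WardRecurrence a) (hcop : ∀ n, IsCoprime (a n) (a (n + 1)))
    {p : R} (hp : Prime p) (k : ℕ) : AddSubgroup ℤ where
  carrier := {n | p ^ k ∣ a n}
  zero_mem' := by simp [h.apply_zero]
  add_mem' := h.pow_dvd_apply_add hcop hp
  neg_mem' {n} hn := by
    rw [Set.mem_ofPred_eq, h.apply_neg hcop]
    exact dvd_mul_of_dvd_right hn _

end WardRecurrence

theorem Int.addSubgroup_subsingleton_or_equally_spaced (H : AddSubgroup ℤ) :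
    (H : Set ℤ).Subsingleton ∨
      ∃ c d : ℤ, 1 ≤ d ∧ (H : Set ℤ) = {x | ∃ j : ℤ, x = c + j * d} := by
  obtain ⟨g, rfl⟩ := Int.subgroup_cyclic H
  rw [← AddSubgroup.zmultiples_eq_closure]
  rcases eq_or_ne g 0 with rfl | hg
  · left
    simp
  · right
    refine ⟨0, |g|, Int.one_le_abs hg, ?_⟩
    ext x
    simp only [SetLike.mem_coe, Int.mem_zmultiples_iff, Set.mem_ofPred_eq, zero_add]
    rw [← abs_dvd, dvd_iff_exists_eq_mul_left]

theorem eds_prime_powers_equally_spaced_general (a : ℤ → ℤ)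
    (hW1 : ∀ m n : ℤ, a (m + n) * a (m - n) =
      (a n) ^ 2 * (a (m - 1) * a (m + 1)) - a (n - 1) * a (n + 1) * (a m) ^ 2)
    (hcop : ∀ n : ℤ, IsCoprime (a n) (a (n + 1)))
    (p : ℕ) (hp : p.Prime) (k : ℕ) :
    {n : ℤ | (p : ℤ) ^ k ∣ a n}.Subsingleton ∨
      ∃ (c d : ℤ), 1 ≤ d ∧ {n : ℤ | (p : ℤ) ^ k ∣ a n} = {x : ℤ | ∃ j : ℤ, x = c + j * d} :=
  Int.addSubgroup_subsingleton_or_equally_spaced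
    (WardRecurrence.powDvdAddSubgroup hW1 hcop (Nat.prime_iff_prime_int.mp hp) k)

/-- In an elliptic divisibility sequence (satisfying Ward's two recurrence
families) whose consecutive terms are coprime, the multiples of powers of
primes are equally spaced. -/
theorem eds_prime_powers_equally_spaced (a : ℤ → ℤ)
    (hW1 : ∀ m n : ℤ, a (m + n) * a (m - n) =
      (a n) ^ 2 * (a (m - 1) * a (m + 1)) - a (n - 1) * a (n + 1) * (a m) ^ 2)
    (hW2 : ∀ m n : ℤ, a 1 * a 2 * (a (m + n + 1) * a (m - n)) =
      a n * a (n + 1) * (a (m - 1) * a (m + 2)) - a (n - 1) * a (n + 2) * (a m * a (m + 1)))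
    (hcop : ∀ n : ℤ, IsCoprime (a n) (a (n + 1)))
    (p : ℕ) (hp : p.Prime) (k : ℕ) (hk : 1 ≤ k) :
    {n : ℤ | (p : ℤ) ^ k ∣ a n}.Subsingleton ∨
      ∃ (c d : ℤ), 1 ≤ d ∧ {n : ℤ | (p : ℤ) ^ k ∣ a n} = {x : ℤ | ∃ j : ℤ, x = c + j * d} :=
  eds_prime_powers_equally_spaced_general a hW1 hcop p hp k
end

section
/- Let a : ℤ → ℤ satisfy the Ward recurrence families: for all m, n ∈ ℤ, a(m+n)·a(m−n) = a(n)²·a(m−1)·a(m+1) − a(n−1)·a(n+1)·a(m)², and a(1)·a(2)·a(m+n+1)·a(m−n) = a(n)·a(n+1)·a(m−1)·a(m+2) − a(n−1)·a(n+2)·a(m)·a(m+1). Suppose a(0) = 0 and that consecutive terms are coprime: for all n ∈ ℤ, IsCoprime (a(n)) (a(n+1)). Then the sequence is a divisibility sequence: for all integers k > 1 and all m ∈ ℤ, if k divides m then a(k) divides a(m). -/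
/-!
If a prime `p` divides `a 2`, then modulo `p` the sequence has `a 2 = 0`; the first Ward relation
with `n = 2` then forces every odd term to be a unit there, so `p` divides no odd term. The second
Ward relation yields the doubling formula `a 2 * a (2n) = a n * C n` with
`C n = a (n-1)^2 a (n+2) - a (n-2) a (n+1)^2`, and since the odd terms have valuation zero, it
computes `v_p (a (2n))` from the valuations of smaller even terms. If `v_p (a 4) < v_p (a 2)`, these
valuations would decrease linearly along the even terms and become negative, so `a 2 ∣ a 4`.
By induction `a 2` divides every even term, hence every `C n`, and the doubling formula gives
`a n ∣ a (2n)`. For odd multiples, the first Ward relation with `(m, n) = (x(2s+1), x)` and the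
coprimality of `a x` with `a (x - 1) a (x + 1)` give `a x ∣ a (x(2s+1))` from the divisibility of
the two neighbouring even multiples. When `a 2 = 0`, the even terms vanish and the odd ones are units.
-/

section CommRing

variable {R S : Type*} [CommRing R] [CommRing S]

def WardEvenRel (a : ℤ → R) : Prop :=
  ∀ m n : ℤ, a (m + n) * a (m - n) =
    a n ^ 2 * (a (m - 1) * a (m + 1)) - a (n - 1) * a (n + 1) * a m ^ 2

def WardOddRel (a : ℤ → R) : Prop :=
  ∀ m n : ℤ, a 1 * a 2 * (a (m + n + 1) * a (m - n)) =
    a n * a (n + 1) * (a (m - 1) * a (m + 2)) - a (n - 1) * a (n + 2) * (a m * a (m + 1))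

def doublingCofactor (a : ℤ → R) (n : ℤ) : R :=
  a (n - 1) ^ 2 * a (n + 2) - a (n - 2) * a (n + 1) ^ 2

namespace WardEvenRel

variable {a : ℤ → R}

theorem comp_ringHom (h : WardEvenRel a) (f : R →+* S) : WardEvenRel (f ∘ a) := fun m n => by
  simpa using congrArg f (h m n)

theorem odd [IsReduced R] (h : WardEvenRel a) (h0 : a 0 = 0) (h1 : IsUnit (a 1)) :
    Function.Odd a := by
  have hneg_one : a (-1) * a 1 = -1 := by
    have h10 := h 1 0
    norm_num [h0] at h10
    have : a 1 ^ 2 * (a (-1) * a 1 + 1) = 0 := by linear_combination h10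
    exact eq_neg_of_add_eq_zero_left ((h1.pow 2).mul_right_eq_zero.1 this)
  have key : ∀ n, a n * a (-n) = -a n ^ 2 := fun n => by
    have h0n := h 0 n
    simp only [zero_add, zero_sub, h0] at h0n
    linear_combination h0n + a n ^ 2 * hneg_one
  intro n
  have hsq : (a (-n) + a n) ^ 2 = 0 := by
    have := key (-n)
    rw [neg_neg] at this
    linear_combination key n + this
  exact eq_neg_of_add_eq_zero_left (IsReduced.eq_zero _ ⟨2, hsq⟩)

theorem mul_eq_of_two_eq_zero (h : WardEvenRel a) (h2 : a 2 = 0) (n : ℤ) :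
    a (n + 2) * a (n - 2) = -(a 1 * a 3) * a n ^ 2 := by
  have := h n 2
  norm_num [h2] at this
  linear_combination this

theorem isUnit_of_odd (h : WardEvenRel a) (h2 : a 2 = 0) (h1 : IsUnit (a 1)) (h3 : IsUnit (a 3))
    {n : ℤ} (hn : Odd n) : IsUnit (a n) := by
  have step : ∀ n, IsUnit (a n) → IsUnit (a (n + 2)) ∧ IsUnit (a (n - 2)) := fun n hn =>
    IsUnit.mul_iff.1 (h.mul_eq_of_two_eq_zero h2 n ▸ (h1.mul h3).neg.mul (hn.pow 2))
  obtain ⟨j, rfl⟩ := hn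
  induction j using Int.induction_on with
  | zero => simpa using h1
  | succ i ih =>
    rw [show 2 * ((i : ℤ) + 1) + 1 = 2 * i + 1 + 2 by ring]
    exact (step _ ih).1
  | pred i ih =>
    rw [show 2 * (-(i : ℤ) - 1) + 1 = 2 * -i + 1 - 2 by ring]
    exact (step _ ih).2

theorem eq_zero_of_even [IsReduced R] (h : WardEvenRel a) (h0 : a 0 = 0) (h2 : a 2 = 0)
    (h1 : IsUnit (a 1)) (h3 : IsUnit (a 3)) {n : ℤ} (hn : Even n) : a n = 0 := by
  have hu : IsUnit (-(a 1 * a 3)) := (h1.mul h3).neg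
  have hmid : ∀ n, a (n + 2) * a (n - 2) = 0 → a n = 0 := fun n hz => by
    rw [h.mul_eq_of_two_eq_zero h2, hu.mul_right_eq_zero] at hz
    exact IsReduced.eq_zero _ ⟨2, hz⟩
  obtain ⟨j, rfl⟩ := hn
  induction j using Int.induction_on with
  | zero => simpa using h0
  | succ i ih =>
    refine hmid _ ?_
    rw [show (i : ℤ) + 1 + (i + 1) - 2 = i + i by ring, ih, mul_zero]
  | pred i ih =>
    refine hmid _ ?_
    rw [show -(i : ℤ) - 1 + (-i - 1) + 2 = -i + -i by ring, ih, zero_mul]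

theorem not_dvd_of_odd (h : WardEvenRel a) (h1 : IsUnit (a 1)) (h23 : IsCoprime (a 2) (a 3))
    {p : R} (hp : ¬IsUnit p) (hpa : p ∣ a 2) {n : ℤ} (hn : Odd n) : ¬p ∣ a n := by
  set f := Ideal.Quotient.mk (Ideal.span {p})
  have hf : ∀ x, f x = 0 ↔ p ∣ x := Ideal.Quotient.eq_zero_iff_dvd p
  have h2 : (f ∘ a) 2 = 0 := (hf _).2 hpa
  have h3 : IsUnit ((f ∘ a) 3) := isCoprime_zero_left.1 (h2 ▸ h23.map f)
  have hu := (h.comp_ringHom f).isUnit_of_odd h2 (h1.map f) h3 hn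
  intro hpn
  rw [Function.comp_apply, (hf _).2 hpn, isUnit_zero_iff, ← map_one f, eq_comm, hf] at hu
  exact hp (isUnit_of_dvd_one hu)

end WardEvenRel

theorem doublingCofactor_dvd_of_dvd {a : ℤ → R} {d : R} {n : ℤ} (hm : d ∣ a (n - 2))
    (hp : d ∣ a (n + 2)) : d ∣ doublingCofactor a n :=
  dvd_sub (dvd_mul_of_dvd_right hp _) (dvd_mul_of_dvd_left hm _)

theorem sq_dvd_doublingCofactor_of_dvd {a : ℤ → R} {d : R} {n : ℤ} (hm : d ∣ a (n - 1))
    (hp : d ∣ a (n + 1)) : d ^ 2 ∣ doublingCofactor a n :=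
  dvd_sub (dvd_mul_of_dvd_left (pow_dvd_pow_of_dvd hm 2) _)
    (dvd_mul_of_dvd_right (pow_dvd_pow_of_dvd hp 2) _)

theorem Function.Odd.dvd_apply_mul_of_nat {a : ℤ → R} (ha : Function.Odd a) {d : R} {c : ℤ}
    (h : ∀ t : ℕ, d ∣ a (c * t)) (t : ℤ) : d ∣ a (c * t) := by
  obtain ⟨n, rfl | rfl⟩ := Int.eq_nat_or_neg t
  · exact h n
  · rw [mul_neg, ha, dvd_neg]
    exact h n

theorem WardEvenRel.apply_dvd_apply_mul_of_two_eq_zero [IsReduced R] {a : ℤ → R}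
    (h : WardEvenRel a) (h0 : a 0 = 0) (h2 : a 2 = 0) (h1 : IsUnit (a 1)) (h3 : IsUnit (a 3))
    (k t : ℤ) : a k ∣ a (k * t) := by
  rcases Int.even_or_odd k with hk | hk
  · rw [h.eq_zero_of_even h0 h2 h1 h3 (hk.mul_right t)]
    exact dvd_zero _
  · exact (h.isUnit_of_odd h2 h1 h3 hk).dvd

end CommRing

theorem emultiplicity_sub_of_lt {R : Type*} [Ring R] {p x y : R}
    (h : emultiplicity p x < emultiplicity p y) : emultiplicity p (x - y) = emultiplicity p x := by
  rw [← neg_sub, emultiplicity_neg, emultiplicity_sub_of_gt h]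

theorem apply_two_le_apply_four_of_doubling {μ : ℤ → ℕ∞} (h2 : μ 2 ≠ ⊤)
    (heven : ∀ n, Even n → μ (n + 2) < μ (n - 2) → μ 2 + μ (2 * n) = μ n + μ (n + 2))
    (hodd : ∀ n, Odd n → μ (n + 1) < μ (n - 1) → μ 2 + μ (2 * n) = μ (n + 1) + μ (n + 1)) :
    μ 2 ≤ μ 4 := by
  by_contra! h42
  obtain ⟨α, hα⟩ := ENat.ne_top_iff_exists.1 h2
  obtain ⟨β, hβ⟩ := ENat.ne_top_iff_exists.1 (h42.trans_le le_top).ne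
  have hβα : β < α := by rw [← hα, ← hβ] at h42; exact_mod_cast h42
  set δ := α - β
  have hδ : 0 < δ := by omega
  have finite_of_add : ∀ {x y : ℕ∞} {k : ℕ}, ↑α + x = y → y = k → ∃ k' : ℕ, ↑k' = x := by
    intro x y k hxy hy
    refine ENat.ne_top_iff_exists.1 fun hx => ?_
    simp [hx, hy] at hxy
  have key : ∀ m : ℕ, ∃ k : ℕ, μ (2 * m + 2) = k ∧ k + m * δ = α := by
    intro m
    induction m using Nat.strong_induction_on with
    | _ m ih =>
    rcases Nat.even_or_odd' m with ⟨l, rfl | rfl⟩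
    · rcases l with _ | l
      · exact ⟨α, by simpa using hα.symm, by simp⟩
      obtain ⟨k₁, hk₁, e₁⟩ := ih l (by omega)
      obtain ⟨k₂, hk₂, e₂⟩ := ih (l + 1) (by omega)
      have hrule := hodd (2 * l + 3) ⟨l + 1, by ring⟩
      -- bring all indices to one normal form, so that `hk₁`, `hk₂` rewrite inside `hrule`
      push_cast at hk₁ hk₂ hrule ⊢
      ring_nf at hk₁ hk₂ hrule ⊢
      rw [hk₁, hk₂, ← hα] at hrule
      have hrule := hrule (by norm_cast; nlinarith)
      obtain ⟨k, hk⟩ := finite_of_add hrule rfl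
      rw [← hk] at hrule
      norm_cast at hrule
      exact ⟨k, hk.symm, by nlinarith⟩
    · rcases l with _ | l
      · exact ⟨β, by simpa using hβ.symm, by omega⟩
      obtain ⟨k₀, hk₀, e₀⟩ := ih l (by omega)
      obtain ⟨k₁, hk₁, e₁⟩ := ih (l + 1) (by omega)
      obtain ⟨k₂, hk₂, e₂⟩ := ih (l + 2) (by omega)
      have hrule := heven (2 * l + 4) ⟨l + 2, by ring⟩
      push_cast at hk₀ hk₁ hk₂ hrule ⊢
      ring_nf at hk₀ hk₁ hk₂ hrule ⊢
      rw [hk₀, hk₁, hk₂, ← hα] at hrule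
      have hrule := hrule (by norm_cast; nlinarith)
      obtain ⟨k, hk⟩ := finite_of_add hrule rfl
      rw [← hk] at hrule
      norm_cast at hrule
      exact ⟨k, hk.symm, by nlinarith⟩
  obtain ⟨k, -, hk⟩ := key (α + 1)
  nlinarith

section Int

variable {a : ℤ → ℤ}

theorem WardEvenRel.apply_dvd_of_dvd_sub_of_dvd_add (h : WardEvenRel a) {x m : ℤ}
    (hx : IsCoprime (a (x - 1) * a (x + 1)) (a x)) (hsub : a x ∣ a (m - x))
    (hadd : a x ∣ a (m + x)) : a x ∣ a m := by
  have hsq : a x ^ 2 ∣ a (x - 1) * a (x + 1) * a m ^ 2 := by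
    rw [show a (x - 1) * a (x + 1) * a m ^ 2 =
      a x ^ 2 * (a (m - 1) * a (m + 1)) - a (m + x) * a (m - x) by linear_combination h m x]
    exact dvd_sub (dvd_mul_right _ _) (sq (a x) ▸ mul_dvd_mul hadd hsub)
  exact (Int.pow_dvd_pow_iff two_ne_zero).1 (hx.pow_right.symm.dvd_of_dvd_mul_left hsq)

namespace WardOddRel

theorem doubling (hW2 : WardOddRel a) (h1 : IsUnit (a 1)) (n : ℤ) :
    a 2 * a (2 * n) = a n * doublingCofactor a n := by
  have := hW2 n (n - 1)
  rw [show n + (n - 1) + 1 = 2 * n by ring, sub_sub_cancel, sub_sub, show n - 1 + 1 = n by ring,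
    show (1 : ℤ) + 1 = 2 by norm_num, show n - 1 + 2 = n + 1 by ring] at this
  rw [doublingCofactor]
  linear_combination this - a 2 * a (2 * n) * Int.isUnit_sq h1

theorem apply_two_mul_eq (hW2 : WardOddRel a) (h1 : IsUnit (a 1)) (ha2 : a 2 ≠ 0) {n : ℤ}
    (hn : a 2 ∣ doublingCofactor a n) : a (2 * n) = a n * (doublingCofactor a n / a 2) := by
  apply mul_left_cancel₀ ha2
  rw [hW2.doubling h1, mul_left_comm, Int.mul_ediv_cancel' hn]

theorem apply_two_dvd_apply_four (hW2 : WardOddRel a) (hW1 : WardEvenRel a) (h1 : IsUnit (a 1))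
    (h23 : IsCoprime (a 2) (a 3)) (ha2 : a 2 ≠ 0) : a 2 ∣ a 4 := by
  refine (UniqueFactorizationMonoid.dvd_iff_emultiplicity_le ha2).2 fun p hp => ?_
  by_cases hpa : p ∣ a 2
  swap
  · rw [emultiplicity_eq_zero.2 hpa]
    exact zero_le
  have hodd : ∀ n, Odd n → emultiplicity p (a n) = 0 := fun n hn =>
    emultiplicity_eq_zero.2 (hW1.not_dvd_of_odd h1 h23 hp.not_isUnit hpa hn)
  have hd : ∀ n, emultiplicity p (a 2) + emultiplicity p (a (2 * n)) =
      emultiplicity p (a n) + emultiplicity p (doublingCofactor a n) := fun n => by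
    simpa only [emultiplicity_mul hp] using congrArg (emultiplicity p) (hW2.doubling h1 n)
  refine apply_two_le_apply_four_of_doubling (μ := fun n => emultiplicity p (a n))
    (finiteMultiplicity_iff_emultiplicity_ne_top.1 (FiniteMultiplicity.of_prime_left hp ha2))
    (fun n hn hlt => ?_) (fun n hn hlt => ?_)
  · have hprev : emultiplicity p (a (n - 1)) = 0 := hodd _ (hn.sub_odd odd_one)
    have hnext : emultiplicity p (a (n + 1)) = 0 := hodd _ hn.add_one
    rw [hd, doublingCofactor, emultiplicity_sub_of_lt] <;>
      simp only [sq, emultiplicity_mul hp, hprev, hnext, zero_add, add_zero]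
    exact hlt
  · have hn0 : emultiplicity p (a n) = 0 := hodd _ hn
    have hprev : emultiplicity p (a (n - 2)) = 0 := hodd _ (hn.sub_even even_two)
    have hnext : emultiplicity p (a (n + 2)) = 0 := hodd _ (hn.add_even even_two)
    rw [hd, doublingCofactor, ← neg_sub, emultiplicity_neg, emultiplicity_sub_of_lt] <;>
      simp only [sq, emultiplicity_mul hp, hn0, hprev, hnext, zero_add, add_zero]
    exact ENat.add_lt_add hlt hlt

theorem apply_two_dvd_apply_two_mul (hW2 : WardOddRel a) (hW1 : WardEvenRel a) (h0 : a 0 = 0)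
    (h1 : IsUnit (a 1)) (h23 : IsCoprime (a 2) (a 3)) (ha2 : a 2 ≠ 0) (t : ℤ) :
    a 2 ∣ a (2 * t) := by
  refine (hW1.odd h0 h1).dvd_apply_mul_of_nat (fun j => ?_) t
  induction j using Nat.strong_induction_on with
  | _ j ih =>
  have ih' : ∀ i < j, ∀ N : ℤ, N = 2 * i → a 2 ∣ a N := fun i hi N hN => hN ▸ ih i hi
  rcases Nat.even_or_odd' j with ⟨n, rfl | rfl⟩
  · rcases n with _ | _ | n
    · simp [h0]
    · simpa using hW2.apply_two_dvd_apply_four hW1 h1 h23 ha2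
    · have hc : a 2 ∣ doublingCofactor a (2 * n + 4) :=
        doublingCofactor_dvd_of_dvd (ih' (n + 1) (by omega) _ (by push_cast; ring))
          (ih' (n + 3) (by omega) _ (by push_cast; ring))
      rw [show 2 * ((2 * (n + 2) : ℕ) : ℤ) = 2 * (2 * n + 4) by push_cast; ring,
        hW2.apply_two_mul_eq h1 ha2 hc]
      exact dvd_mul_of_dvd_left (ih' (n + 2) (by omega) _ (by push_cast; ring)) _
  · rcases n with _ | n
    · simp
    · have hc : a 2 * a 2 ∣ doublingCofactor a (2 * n + 3) :=
        sq (a 2) ▸ sq_dvd_doublingCofactor_of_dvd (ih' (n + 1) (by omega) _ (by push_cast; ring))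
          (ih' (n + 2) (by omega) _ (by push_cast; ring))
      rw [show 2 * ((2 * (n + 1) + 1 : ℕ) : ℤ) = 2 * (2 * n + 3) by push_cast; ring,
        hW2.apply_two_mul_eq h1 ha2 (dvd_of_mul_left_dvd hc)]
      exact dvd_mul_of_dvd_right (Int.dvd_div_of_mul_dvd hc) _

theorem apply_two_dvd_doublingCofactor (hW2 : WardOddRel a) (hW1 : WardEvenRel a) (h0 : a 0 = 0)
    (h1 : IsUnit (a 1)) (h23 : IsCoprime (a 2) (a 3)) (ha2 : a 2 ≠ 0) (n : ℤ) :
    a 2 ∣ doublingCofactor a n := by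
  have heven := hW2.apply_two_dvd_apply_two_mul hW1 h0 h1 h23 ha2
  rcases Int.even_or_odd' n with ⟨j, rfl | rfl⟩
  · refine doublingCofactor_dvd_of_dvd ?_ ?_
    · simpa only [mul_sub, mul_one] using heven (j - 1)
    · simpa only [mul_add, mul_one] using heven (j + 1)
  · refine dvd_trans (dvd_pow_self _ two_ne_zero) (sq_dvd_doublingCofactor_of_dvd ?_ ?_)
    · simpa only [add_sub_cancel_right] using heven j
    · simpa only [mul_add, mul_one, add_assoc, one_add_one_eq_two] using heven (j + 1)

theorem apply_dvd_apply_two_mul (hW2 : WardOddRel a) (hW1 : WardEvenRel a) (h0 : a 0 = 0)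
    (h1 : IsUnit (a 1)) (h23 : IsCoprime (a 2) (a 3)) (ha2 : a 2 ≠ 0) (n : ℤ) :
    a n ∣ a (2 * n) := by
  rw [hW2.apply_two_mul_eq h1 ha2 (hW2.apply_two_dvd_doublingCofactor hW1 h0 h1 h23 ha2 n)]
  exact dvd_mul_right _ _

theorem apply_dvd_apply_mul (hW2 : WardOddRel a) (hW1 : WardEvenRel a) (h0 : a 0 = 0)
    (hcop : ∀ n, IsCoprime (a n) (a (n + 1))) (ha2 : a 2 ≠ 0) (k t : ℤ) : a k ∣ a (k * t) := by
  have h1 : IsUnit (a 1) := isCoprime_zero_left.1 (by simpa [h0] using hcop 0)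
  have hdouble := hW2.apply_dvd_apply_two_mul hW1 h0 h1 (hcop 2) ha2
  have hk : IsCoprime (a (k - 1) * a (k + 1)) (a k) :=
    IsCoprime.mul_left (by simpa using hcop (k - 1)) (hcop k).symm
  refine (hW1.odd h0 h1).dvd_apply_mul_of_nat (fun t => ?_) t
  induction t using Nat.strong_induction_on with
  | _ t ih =>
  have ih' : ∀ i < t, ∀ N : ℤ, N = k * i → a k ∣ a N := fun i hi N hN => hN ▸ ih i hi
  rcases Nat.even_or_odd' t with ⟨s, rfl | rfl⟩
  · rcases s with _ | s
    · simp [h0]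
    · rw [show k * ((2 * (s + 1) : ℕ) : ℤ) = 2 * (k * (s + 1 : ℕ)) by push_cast; ring]
      exact (ih' (s + 1) (by omega) _ rfl).trans (hdouble _)
  · rcases s with _ | s
    · simp
    · refine hW1.apply_dvd_of_dvd_sub_of_dvd_add hk (ih' (2 * (s + 1)) (by omega) _ ?_) ?_
      · push_cast; ring
      · rw [show k * ((2 * (s + 1) + 1 : ℕ) : ℤ) + k = 2 * (k * (s + 2 : ℕ)) by push_cast; ring]
        exact (ih' (s + 2) (by omega) _ rfl).trans (hdouble _)

end WardOddRel

end Int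

/-- An elliptic divisibility sequence (satisfying Ward's two recurrence
families) with `a 0 = 0` and coprime consecutive terms is a divisibility
sequence: `k ∣ m → a k ∣ a m` for all `k > 1`. -/
theorem eds_divisibility_sequence (a : ℤ → ℤ)
    (hW1 : ∀ m n : ℤ, a (m + n) * a (m - n) =
      (a n) ^ 2 * (a (m - 1) * a (m + 1)) - a (n - 1) * a (n + 1) * (a m) ^ 2)
    (hW2 : ∀ m n : ℤ, a 1 * a 2 * (a (m + n + 1) * a (m - n)) =
      a n * a (n + 1) * (a (m - 1) * a (m + 2)) - a (n - 1) * a (n + 2) * (a m * a (m + 1)))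
    (h0 : a 0 = 0)
    (hcop : ∀ n : ℤ, IsCoprime (a n) (a (n + 1))) :
    ∀ k : ℤ, 1 < k → ∀ m : ℤ, k ∣ m → a k ∣ a m := by
  rintro k - m ⟨t, rfl⟩
  obtain ha2 | ha2 := eq_or_ne (a 2) 0
  · have h1 : IsUnit (a 1) := isCoprime_zero_left.1 (by simpa [h0] using hcop 0)
    have h3 : IsUnit (a 3) := isCoprime_zero_left.1 (by simpa [ha2] using hcop 2)
    exact WardEvenRel.apply_dvd_apply_mul_of_two_eq_zero hW1 h0 ha2 h1 h3 k t
  · exact WardOddRel.apply_dvd_apply_mul hW2 hW1 h0 hcop ha2 k t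
end

section
/- Let a : ℤ → ℤ satisfy, for all m, n ∈ ℤ, the Ward recurrence a(m+n)·a(m−n) = a(n)²·a(m−1)·a(m+1) − a(n−1)·a(n+1)·a(m)². Suppose a(1) = 1 and a(n) ≠ 0 for all n ≥ 2. Then a(0) = 0 and the sequence extends anti-symmetrically: a(−n) = −a(n) for all n ∈ ℤ with n ≥ 0. -/
/-- A sequence satisfying Ward's recurrence with `a 1 = 1` and `a n ≠ 0` for
`n ≥ 2` has `a 0 = 0` and extends anti-symmetrically: `a(−n) = −a(n)` for `n ≥ 0`. -/
theorem eds_antisymmetric_extension (a : ℤ → ℤ)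
    (hW1 : ∀ m n : ℤ, a (m + n) * a (m - n) =
      (a n) ^ 2 * (a (m - 1) * a (m + 1)) - a (n - 1) * a (n + 1) * (a m) ^ 2)
    (h1 : a 1 = 1)
    (hne : ∀ n : ℤ, 2 ≤ n → a n ≠ 0) :
    a 0 = 0 ∧ ∀ n : ℤ, 0 ≤ n → a (-n) = -a n := by
  have h2 : a 2 ≠ 0 := hne 2 (by norm_num)
  have h3 : a 3 ≠ 0 := hne 3 (by norm_num)
  have h0 : a 0 = 0 := by
    have h := hW1 1 1
    norm_num at h
    have h' : a 2 * a 0 = 0 := by linarith [h]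
    rcases mul_eq_zero.mp h' with h' | h'
    · exact absurd h' h2
    · exact h'
  have hm1 : a (-1) = -1 := by
    have h := hW1 1 2
    norm_num [h0, h1] at h
    have : a 3 * (a (-1) + 1) = 0 := by ring_nf; linarith [h]
    rcases mul_eq_zero.mp this with h' | h'
    · exact absurd h' h3
    · linarith
  refine ⟨h0, fun n hn => ?_⟩
  have h := hW1 0 n
  norm_num [h0, hm1, h1] at h
  rcases eq_or_lt_of_le hn with h01 | hpos
  · rw [← h01]; simp [h0]
  rcases eq_or_lt_of_le (by linarith : (1:ℤ) ≤ n) with h11 | h2n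
  · rw [← h11]; simp [h1, hm1]
  have hAn : a n ≠ 0 := hne n (by linarith)
  have : a n * a (-n) = a n * (-a n) := by rw [h]; ring
  exact mul_left_cancel₀ hAn this
end

section
/- Let R be a commutative ring, q ∈ R a prime element, and let a, τ : ℤ → R satisfy, for all m, n ∈ ℤ, the companion identities τ(m+n)·τ(m−n) = a(n)²·τ(m−1)·τ(m+1) − a(n−1)·a(n+1)·τ(m)² and a(1)·a(2)·τ(m+n+1)·τ(m−n) = a(n)·a(n+1)·τ(m−1)·τ(m+2) − a(n−1)·a(n+2)·τ(m)·τ(m+1). Suppose q does not divide a(1), q does not divide a(2), and for every s ∈ ℤ with q ∣ τ(s), q divides neither τ(s−1) nor τ(s+1). Then the set W = {n ∈ ℤ : q ∣ τ(n)} is a modified set of differences: for all s, t ∈ W, 2s − t ∈ W. -/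
/-- If `q` is a prime element of a commutative ring `R` and `a, τ : ℤ → R`
satisfy the companion elliptic-divisibility-sequence identities, `q` divides
neither `a 1` nor `a 2`, and `q` never divides two terms `τ(s)`, `τ(s ± 1)`
at adjacent indices, then `W = {n : q ∣ τ(n)}` is a modified set of
differences: `s, t ∈ W → 2s − t ∈ W`. -/
theorem companion_modified_set_of_differences {R : Type*} [CommRing R]
    (q : R) (hq : Prime q) (a τ : ℤ → R)
    (hC1 : ∀ m n : ℤ, τ (m + n) * τ (m - n) =
      (a n) ^ 2 * (τ (m - 1) * τ (m + 1)) - a (n - 1) * a (n + 1) * (τ m) ^ 2)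
    (hC2 : ∀ m n : ℤ, a 1 * a 2 * (τ (m + n + 1) * τ (m - n)) =
      a n * a (n + 1) * (τ (m - 1) * τ (m + 2)) - a (n - 1) * a (n + 2) * (τ m * τ (m + 1)))
    (ha1 : ¬ q ∣ a 1) (ha2 : ¬ q ∣ a 2)
    (hadj : ∀ s : ℤ, q ∣ τ s → ¬ q ∣ τ (s - 1) ∧ ¬ q ∣ τ (s + 1)) :
    ∀ s ∈ {n : ℤ | q ∣ τ n}, ∀ t ∈ {n : ℤ | q ∣ τ n}, 2 * s - t ∈ {n : ℤ | q ∣ τ n} := by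
  intro s hs t ht
  simp only [Set.mem_setOf_eq] at hs ht ⊢
  obtain ⟨ht1, ht2⟩ := hadj t ht
  -- Step 1: q ∣ a (s - t)
  have h1 := hC1 t (s - t)
  rw [show t + (s - t) = s by ring] at h1
  have hd1 : q ∣ a (s - t) ^ 2 * (τ (t - 1) * τ (t + 1)) := by
    have hL : q ∣ a (s - t) ^ 2 * (τ (t - 1) * τ (t + 1)) -
        a (s - t - 1) * a (s - t + 1) * τ t ^ 2 := by
      rw [← h1]; exact hs.mul_right _
    have hY : q ∣ a (s - t - 1) * a (s - t + 1) * τ t ^ 2 :=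
      (ht.pow two_ne_zero).mul_left _
    have := dvd_add hL hY
    rwa [sub_add_cancel] at this
  have hast : q ∣ a (s - t) := by
    rcases hq.dvd_mul.mp hd1 with h | h
    · exact hq.dvd_of_dvd_pow h
    · rcases hq.dvd_mul.mp h with h | h
      · exact absurd h ht1
      · exact absurd h ht2
  -- Step 2: use hC2
  have h3 := hC2 s (s - t - 1)
  rw [show s + (s - t - 1) + 1 = 2 * s - t by ring,
      show s - (s - t - 1) = t + 1 by ring,
      show s - t - 1 + 1 = s - t by ring] at h3
  have hd2 : q ∣ a 1 * a 2 * (τ (2 * s - t) * τ (t + 1)) := by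
    rw [h3]
    exact dvd_sub ((hast.mul_left _).mul_right _) ((hs.mul_right _).mul_left _)
  rcases hq.dvd_mul.mp hd2 with h | h
  · rcases hq.dvd_mul.mp h with h | h
    · exact absurd h ha1
    · exact absurd h ha2
  · rcases hq.dvd_mul.mp h with h | h
    · exact h
    · exact absurd h ht2
end

section
/- Let τ : ℤ → ℤ be the integer Somos-4 sequence. Then for all m ∈ ℤ, 2 divides τ(m) if and only if 5 divides m; moreover, 4 never divides τ(m) (higher powers of 2 do not appear in the sequence). -/
/-!
Work modulo 8 and keep track of `n` modulo 10. Solving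
`τ (n + 4) τ n = τ (n + 3) τ (n + 1) + τ (n + 2) ^ 2` for `τ (n + 4)` (or for `τ (n - 1)` in
the backward direction) determines its residue modulo 8 when the divisor is odd, and still modulo 4
when the divisor is `2` modulo `4`. So, starting from the window `(1, 1, 1, 1)` at `n = 1`, only
finitely many windows of four consecutive residues can occur, and in each of them the first
residue is `2` or `6` when `5 ∣ n` and odd otherwise.
-/

def somos4Window (R : Type*) [CommRing R] (K : ℕ) (τ : ℤ → ℤ) (n : ℤ) :
    R × R × R × R × ZMod K :=
  (τ n, τ (n + 1), τ (n + 2), τ (n + 3), n)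

theorem somos4Window_mem_of_closed {R : Type*} [CommRing R] {K : ℕ} {τ : ℤ → ℤ}
    (hrec : ∀ n : ℤ, τ (n + 2) * τ (n - 2) = τ (n + 1) * τ (n - 1) + τ n ^ 2)
    {S : Set (R × R × R × R × ZMod K)}
    (hfwd : ∀ a b c d k x,
      (a, b, c, d, k) ∈ S → x * a = d * b + c ^ 2 → (b, c, d, x, k + 1) ∈ S)
    (hbwd : ∀ a b c d k x,
      (a, b, c, d, k) ∈ S → x * d = c * a + b ^ 2 → (x, a, b, c, k - 1) ∈ S)
    {n₀ : ℤ} (h₀ : somos4Window R K τ n₀ ∈ S) (n : ℤ) :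
    somos4Window R K τ n ∈ S := by
  induction n using Int.inductionOn' (b := n₀) with
  | zero => exact h₀
  | succ k _ ih =>
    have h : τ (k + 4) * τ k = τ (k + 3) * τ (k + 1) + τ (k + 2) ^ 2 := by
      have := hrec (k + 2); ring_nf at this ⊢; exact this
    have hR := congrArg (Int.cast : ℤ → R) h
    push_cast at hR
    convert hfwd _ _ _ _ _ _ ih hR using 1
    simp only [somos4Window]
    push_cast
    ring_nf
  | pred k _ ih =>
    have h : τ (k - 1) * τ (k + 3) = τ (k + 2) * τ k + τ (k + 1) ^ 2 := by
      have := hrec (k + 1); ring_nf at this ⊢; linear_combination this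
    have hR := congrArg (Int.cast : ℤ → R) h
    push_cast at hR
    convert hbwd _ _ _ _ _ _ ih hR using 1
    simp only [somos4Window]
    push_cast
    ring_nf

/-- The windows reachable from `(1, 1, 1, 1)` at phase `1` by the recurrence modulo 8, run in both
directions. -/
def somos4ResiduesMod8 : List (ZMod 8 × ZMod 8 × ZMod 8 × ZMod 8 × ZMod 10) :=
  [(2,1,1,1,0), (6,5,1,1,0),
   (1,1,1,1,1), (1,1,1,5,1), (5,1,1,1,1), (5,1,1,5,1),
   (1,1,1,2,2), (1,1,5,6,2),
   (1,1,2,3,3), (1,5,6,7,3),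
   (1,2,3,7,4), (5,6,7,7,4),
   (2,3,7,7,5), (6,7,7,7,5),
   (3,7,7,3,6), (3,7,7,7,6), (7,7,7,3,6), (7,7,7,7,6),
   (7,7,3,2,7), (7,7,7,6,7),
   (7,3,2,1,8), (7,7,6,5,8),
   (3,2,1,1,9), (7,6,5,1,9)]

theorem somos4ResiduesMod8_closed_forward :
    somos4ResiduesMod8.Forall fun (a, b, c, d, k) => ∀ x : ZMod 8,
      x * a = d * b + c ^ 2 → (b, c, d, x, k + 1) ∈ somos4ResiduesMod8 := by
  decide

theorem somos4ResiduesMod8_closed_backward :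
    somos4ResiduesMod8.Forall fun (a, b, c, d, k) => ∀ x : ZMod 8,
      x * d = c * a + b ^ 2 → (x, a, b, c, k - 1) ∈ somos4ResiduesMod8 := by
  decide

theorem somos4ResiduesMod8_val :
    somos4ResiduesMod8.Forall fun (a, _, _, _, k) =>
      (a.val % 2 = 0 ↔ k.val % 5 = 0) ∧ a.val % 4 ≠ 0 := by
  decide

/-- In the integer Somos-4 sequence, `2 ∣ τ(m)` iff `5 ∣ m`, and `4` never
divides `τ(m)`. -/
theorem somos4_powers_of_two (τ : ℤ → ℤ)
    (hrec : ∀ n : ℤ, τ (n + 2) * τ (n - 2) = τ (n + 1) * τ (n - 1) + (τ n) ^ 2)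
    (h1 : τ 1 = 1) (h2 : τ 2 = 1) (h3 : τ 3 = 1) (h4 : τ 4 = 1) :
    ∀ m : ℤ, ((2 : ℤ) ∣ τ m ↔ (5 : ℤ) ∣ m) ∧ ¬ (4 : ℤ) ∣ τ m := by
  intro m
  have hinit : somos4Window (ZMod 8) 10 τ 1 ∈ {s | s ∈ somos4ResiduesMod8} := by
    simp only [somos4Window, h1, h2, h3, h4, Int.reduceAdd, Int.cast_one]
    decide
  have hwindow : somos4Window (ZMod 8) 10 τ m ∈ {s | s ∈ somos4ResiduesMod8} :=
    somos4Window_mem_of_closed hrec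
      (fun _ _ _ _ _ x hs =>
        List.forall_iff_forall_mem.mp somos4ResiduesMod8_closed_forward _ hs x)
      (fun _ _ _ _ _ x hs =>
        List.forall_iff_forall_mem.mp somos4ResiduesMod8_closed_backward _ hs x)
      hinit m
  have h := List.forall_iff_forall_mem.mp somos4ResiduesMod8_val _ hwindow
  simp only [somos4Window] at h
  have hτ := ZMod.val_intCast (n := 8) (τ m)
  have hm := ZMod.val_intCast (n := 10) m
  omega
end

section
/- Let τ : ℤ → ℤ[α,β] be the polynomial Somos-4 sequence, and let τ' : ℤ → ℤ[α,β] satisfy the same Somos-4 recurrence τ'(n+2)·τ'(n−2) = α·τ'(n+1)·τ'(n−1) + β·τ'(n)² for all n ∈ ℤ, but with initial values τ'(1) = 1, τ'(2) = −1, τ'(3) = −1, τ'(4) = 1. Then for all n ∈ ℤ, τ'(n) = (−1)^⌊n/2⌋ · σ(τ(n)), where σ : ℤ[α,β] → ℤ[α,β] is the ring homomorphism substituting α ↦ −α and β ↦ β, and ⌊n/2⌋ denotes the floor of n/2 (so (−1)^⌊n/2⌋ is 1 when ⌊n/2⌋ is even and −1 otherwise). -/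
open MvPolynomial

noncomputable def somosSigma : MvPolynomial (Fin 2) ℤ →ₐ[ℤ] MvPolynomial (Fin 2) ℤ :=
  aeval ![-X 0, X 1]

noncomputable def somosF (τ : ℤ → MvPolynomial (Fin 2) ℤ) (n : ℤ) : MvPolynomial (Fin 2) ℤ :=
  (((n / 2).negOnePow : ℤ) : MvPolynomial (Fin 2) ℤ) * somosSigma (τ n)

lemma somosSigma_X0 : somosSigma (X 0) = -X 0 := by simp [somosSigma]

lemma somosSigma_X1 : somosSigma (X 1) = X 1 := by simp [somosSigma]

lemma somosSigma_sigma (p : MvPolynomial (Fin 2) ℤ) : somosSigma (somosSigma p) = p := by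
  have h : somosSigma.comp somosSigma = AlgHom.id ℤ (MvPolynomial (Fin 2) ℤ) := by
    apply MvPolynomial.algHom_ext
    intro i
    fin_cases i <;> simp [somosSigma]
  have := DFunLike.congr_fun h p
  simpa using this

lemma somos_sign1 (n : ℤ) : (((n + 2) / 2).negOnePow : ℤ) * (((n - 2) / 2).negOnePow : ℤ) = 1 := by
  have h : ((n + 2) / 2).negOnePow * ((n - 2) / 2).negOnePow = 1 := by
    rw [← Int.negOnePow_add, show (n + 2) / 2 + (n - 2) / 2 = 2 * (n / 2) by omega,
      Int.negOnePow_two_mul]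
  simpa using congrArg Units.val h

lemma somos_sign2 (n : ℤ) :
    (((n + 1) / 2).negOnePow : ℤ) * (((n - 1) / 2).negOnePow : ℤ) = -1 := by
  have h : ((n + 1) / 2).negOnePow * ((n - 1) / 2).negOnePow = -1 := by
    rw [← Int.negOnePow_add]
    exact Int.negOnePow_odd _ ⟨(n + 1) / 2 - 1, by omega⟩
  simpa using congrArg Units.val h

lemma somos_sign3 (n : ℤ) : ((n / 2).negOnePow : ℤ) * ((n / 2).negOnePow : ℤ) = 1 := by
  simp

lemma somos_ne_zero (τ : ℤ → MvPolynomial (Fin 2) ℤ)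
    (hrec : ∀ n : ℤ, τ (n + 2) * τ (n - 2) =
      X 0 * (τ (n + 1) * τ (n - 1)) + X 1 * (τ n) ^ 2)
    (h1 : τ 1 = 1) (h2 : τ 2 = 1) (h3 : τ 3 = 1) (h4 : τ 4 = 1) :
    ∀ n : ℤ, τ n ≠ 0 := by
  set ev := (aeval ![(1 : ℤ), 1] : MvPolynomial (Fin 2) ℤ →ₐ[ℤ] ℤ) with hev
  have ht : ∀ n : ℤ, ev (τ (n + 2)) * ev (τ (n - 2)) =
      ev (τ (n + 1)) * ev (τ (n - 1)) + ev (τ n) ^ 2 := by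
    intro n
    have := congrArg ev (hrec n)
    simpa [hev] using this
  have key : ∀ n : ℤ, 0 < ev (τ n) ∧ 0 < ev (τ (n + 1)) ∧ 0 < ev (τ (n + 2)) ∧
      0 < ev (τ (n + 3)) := by
    intro n
    refine Int.inductionOn' n 1 ?_ ?_ ?_
    · norm_num [h1, h2, h3, h4]
    · intro k _ ih
      obtain ⟨p0, p1, p2, p3⟩ := ih
      have h := ht (k + 2)
      rw [show k + 2 + 2 = k + 4 by ring, show k + 2 - 2 = k by ring,
        show k + 2 + 1 = k + 3 by ring, show k + 2 - 1 = k + 1 by ring] at h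
      have hp : 0 < ev (τ (k + 4)) := by
        nlinarith [mul_pos p3 p1, sq_nonneg (ev (τ (k + 2)))]
      refine ⟨p1, ?_, ?_, ?_⟩
      · rw [show k + 1 + 1 = k + 2 by ring]; exact p2
      · rw [show k + 1 + 2 = k + 3 by ring]; exact p3
      · rw [show k + 1 + 3 = k + 4 by ring]; exact hp
    · intro k _ ih
      obtain ⟨p0, p1, p2, p3⟩ := ih
      have h := ht (k + 1)
      rw [show k + 1 + 2 = k + 3 by ring, show k + 1 - 2 = k - 1 by ring,
        show k + 1 + 1 = k + 2 by ring, show k + 1 - 1 = k by ring] at h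
      have hp : 0 < ev (τ (k - 1)) := by
        nlinarith [mul_pos p2 p0, sq_nonneg (ev (τ (k + 1)))]
      refine ⟨hp, ?_, ?_, ?_⟩
      · rw [show k - 1 + 1 = k by ring]; exact p0
      · rw [show k - 1 + 2 = k + 1 by ring]; exact p1
      · rw [show k - 1 + 3 = k + 2 by ring]; exact p2
  intro n hzero
  have := (key n).1
  rw [hzero] at this
  simp at this

lemma somosF_rec (τ : ℤ → MvPolynomial (Fin 2) ℤ)
    (hrec : ∀ n : ℤ, τ (n + 2) * τ (n - 2) =
      X 0 * (τ (n + 1) * τ (n - 1)) + X 1 * (τ n) ^ 2) :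
    ∀ n : ℤ, somosF τ (n + 2) * somosF τ (n - 2) =
      X 0 * (somosF τ (n + 1) * somosF τ (n - 1)) + X 1 * (somosF τ n) ^ 2 := by
  intro n
  have h := congrArg somosSigma (hrec n)
  simp only [map_add, map_mul, map_pow, somosSigma_X0, somosSigma_X1] at h
  have c1 : ((((n + 2) / 2).negOnePow : ℤ) : MvPolynomial (Fin 2) ℤ) *
      ((((n - 2) / 2).negOnePow : ℤ) : MvPolynomial (Fin 2) ℤ) = 1 := by
    rw [← Int.cast_mul, somos_sign1, Int.cast_one]
  have c2 : ((((n + 1) / 2).negOnePow : ℤ) : MvPolynomial (Fin 2) ℤ) *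
      ((((n - 1) / 2).negOnePow : ℤ) : MvPolynomial (Fin 2) ℤ) = -1 := by
    rw [← Int.cast_mul, somos_sign2, Int.cast_neg, Int.cast_one]
  have c3 : (((n / 2).negOnePow : ℤ) : MvPolynomial (Fin 2) ℤ) *
      (((n / 2).negOnePow : ℤ) : MvPolynomial (Fin 2) ℤ) = 1 := by
    rw [← Int.cast_mul, somos_sign3, Int.cast_one]
  simp only [somosF]
  linear_combination (somosSigma (τ (n + 2)) * somosSigma (τ (n - 2))) * c1 + h -
    (X 0 * (somosSigma (τ (n + 1)) * somosSigma (τ (n - 1)))) * c2 -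
    (X 1 * (somosSigma (τ n)) ^ 2) * c3

lemma somosF_ne_zero (τ : ℤ → MvPolynomial (Fin 2) ℤ) (n : ℤ) (hτ : τ n ≠ 0) :
    somosF τ n ≠ 0 := by
  apply mul_ne_zero
  · rcases Int.units_eq_one_or (n / 2).negOnePow with h | h <;> rw [h] <;> simp
  · intro h
    apply hτ
    have := congrArg somosSigma h
    rwa [somosSigma_sigma, map_zero] at this

/-- If `τ` is the polynomial Somos-4 sequence and `τ'` satisfies the same
recurrence with initial values `1, −1, −1, 1`, then
`τ'(n) = (−1)^⌊n/2⌋ · σ(τ(n))`, where `σ` is the substitution `α ↦ −α, β ↦ β`.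
(Note that `n / 2` on `ℤ` in Lean is floor division for the positive divisor `2`.) -/
theorem somos4_sign_flip_equivalence (τ τ' : ℤ → MvPolynomial (Fin 2) ℤ)
    (hrec : ∀ n : ℤ, τ (n + 2) * τ (n - 2) =
      X 0 * (τ (n + 1) * τ (n - 1)) + X 1 * (τ n) ^ 2)
    (h1 : τ 1 = 1) (h2 : τ 2 = 1) (h3 : τ 3 = 1) (h4 : τ 4 = 1)
    (hrec' : ∀ n : ℤ, τ' (n + 2) * τ' (n - 2) =
      X 0 * (τ' (n + 1) * τ' (n - 1)) + X 1 * (τ' n) ^ 2)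
    (h1' : τ' 1 = 1) (h2' : τ' 2 = -1) (h3' : τ' 3 = -1) (h4' : τ' 4 = 1) :
    ∀ n : ℤ, τ' n = (((n / 2).negOnePow : ℤ) : MvPolynomial (Fin 2) ℤ) *
      (aeval ![-X 0, X 1] : MvPolynomial (Fin 2) ℤ →ₐ[ℤ] MvPolynomial (Fin 2) ℤ) (τ n) := by
  have hτne : ∀ n : ℤ, τ n ≠ 0 := somos_ne_zero τ hrec h1 h2 h3 h4
  have hFne : ∀ n : ℤ, somosF τ n ≠ 0 := fun n => somosF_ne_zero τ n (hτne n)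
  have hFrec := somosF_rec τ hrec
  have F1 : somosF τ 1 = 1 := by
    rw [somosF, h1, map_one, mul_one, show (1 : ℤ) / 2 = 0 by norm_num, Int.negOnePow_zero]
    simp
  have F2 : somosF τ 2 = -1 := by
    rw [somosF, h2, map_one, mul_one, show (2 : ℤ) / 2 = 1 by norm_num, Int.negOnePow_one]
    simp
  have F3 : somosF τ 3 = -1 := by
    rw [somosF, h3, map_one, mul_one, show (3 : ℤ) / 2 = 1 by norm_num, Int.negOnePow_one]
    simp
  have F4 : somosF τ 4 = 1 := by
    rw [somosF, h4, map_one, mul_one, show (4 : ℤ) / 2 = 2 * 1 by norm_num,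
      Int.negOnePow_two_mul]
    simp
  have claim : ∀ n : ℤ, τ' n = somosF τ n ∧ τ' (n + 1) = somosF τ (n + 1) ∧
      τ' (n + 2) = somosF τ (n + 2) ∧ τ' (n + 3) = somosF τ (n + 3) := by
    intro n
    refine Int.inductionOn' n 1 ?_ ?_ ?_
    · norm_num [h1', h2', h3', h4', F1, F2, F3, F4]
    · intro k _ ih
      obtain ⟨e0, e1, e2, e3⟩ := ih
      have ha := hrec' (k + 2)
      have hb := hFrec (k + 2)
      rw [show k + 2 + 2 = k + 4 by ring, show k + 2 - 2 = k by ring,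
        show k + 2 + 1 = k + 3 by ring, show k + 2 - 1 = k + 1 by ring] at ha hb
      rw [e0, e1, e2, e3] at ha
      have e4 : τ' (k + 4) = somosF τ (k + 4) := mul_right_cancel₀ (hFne k) (ha.trans hb.symm)
      refine ⟨e1, ?_, ?_, ?_⟩
      · rw [show k + 1 + 1 = k + 2 by ring]; exact e2
      · rw [show k + 1 + 2 = k + 3 by ring]; exact e3
      · rw [show k + 1 + 3 = k + 4 by ring]; exact e4
    · intro k _ ih
      obtain ⟨e0, e1, e2, e3⟩ := ih
      have ha := hrec' (k + 1)
      have hb := hFrec (k + 1)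
      rw [show k + 1 + 2 = k + 3 by ring, show k + 1 - 2 = k - 1 by ring,
        show k + 1 + 1 = k + 2 by ring, show k + 1 - 1 = k by ring] at ha hb
      rw [e0, e1, e2, e3] at ha
      have em : τ' (k - 1) = somosF τ (k - 1) :=
        mul_left_cancel₀ (hFne (k + 3)) (ha.trans hb.symm)
      refine ⟨em, ?_, ?_, ?_⟩
      · rw [show k - 1 + 1 = k by ring]; exact e0
      · rw [show k - 1 + 2 = k + 1 by ring]; exact e1
      · rw [show k - 1 + 3 = k + 2 by ring]; exact e2
  intro n
  exact (claim n).1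
end
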